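/- arXiv:2602.01384 — 4 statements merged into one kernel-verified Lean document; each statement's English description precedes it below -/
import Mathlib

section
/- For every t ∈ ℚ with t ≠ 0 and t ≠ -1, setting h = 16t²/(t+1), the pair (h, 16t(t+2)/(t+1)) lies on the curve y² = h(h+64); consequently j = (h+16)³/h satisfies j - 1728 is a square in ℚ, and moreover j = 256(t²+t+1)³/(t²(t+1)²). -/
/-!
Since `(h + 16)³ - 1728 h = (h + 64)(h - 8)²`, the quantity `j₂(h) - 1728` equals `h(h + 64)`
times the square `((h - 8)/h)²`. So `j₂(h) - 1728` is a square as soon as `(h, y)` is a point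
of the conic `y² = h(h + 64)`, and `h = 16t²/(t + 1)` is the rational parametrization of that
conic by lines through its point `(0, 0)`.
-/

section JTwo

variable {K : Type*} [Field K]

theorem j_two_sub_1728_eq {h : K} (hh : h ≠ 0) :
    (h + 16) ^ 3 / h - 1728 = h * (h + 64) * ((h - 8) / h) ^ 2 := by
  field_simp
  ring

theorem isSquare_j_two_sub_1728_of_sq_eq {h y : K} (hh : h ≠ 0) (hy : y ^ 2 = h * (h + 64)) :
    IsSquare ((h + 16) ^ 3 / h - 1728) :=
  ⟨y * ((h - 8) / h), by rw [j_two_sub_1728_eq hh, ← hy]; ring⟩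

theorem param_sq_eq {t : K} (ht : t + 1 ≠ 0) :
    (16 * t * (t + 2) / (t + 1)) ^ 2 =
      16 * t ^ 2 / (t + 1) * (16 * t ^ 2 / (t + 1) + 64) := by
  field_simp
  ring

theorem j_two_param_eq {t : K} (ht : t ≠ 0) (ht' : t + 1 ≠ 0) :
    (16 * t ^ 2 / (t + 1) + 16) ^ 3 / (16 * t ^ 2 / (t + 1)) =
      256 * (t ^ 2 + t + 1) ^ 3 / (t ^ 2 * (t + 1) ^ 2) := by
  field_simp
  ring

end JTwo

/-- For `t ∈ ℚ`, `t ≠ 0, -1`, with `h = 16t²/(t+1)`, the point `(h, 16t(t+2)/(t+1))` lies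
on `y² = h(h+64)`; hence `j₂(h) - 1728` is a square in `ℚ` and
`j₂(h) = 256(t²+t+1)³/(t²(t+1)²)`. -/
theorem param_N_eq_two (t : ℚ) (ht : t ≠ 0) (ht' : t ≠ -1) :
    let h : ℚ := 16 * t ^ 2 / (t + 1)
    (16 * t * (t + 2) / (t + 1)) ^ 2 = h * (h + 64) ∧
      IsSquare ((h + 16) ^ 3 / h - 1728) ∧
      (h + 16) ^ 3 / h = 256 * (t ^ 2 + t + 1) ^ 3 / (t ^ 2 * (t + 1) ^ 2) := by
  intro h
  have ht1 : t + 1 ≠ 0 := by rwa [Ne, add_eq_zero_iff_eq_neg]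
  have hh : h ≠ 0 := by positivity
  exact ⟨param_sq_eq ht1, isSquare_j_two_sub_1728_of_sq_eq hh (param_sq_eq ht1),
    j_two_param_eq ht ht1⟩
end

section
/- The elliptic curve C₅ : y² = x(x² + 22x + 125) over ℚ has exactly one affine rational point, namely (0, 0); i.e. its Mordell–Weil group is isomorphic to ℤ/2ℤ. -/
private lemma parity16 (n : ℤ) : ((n : ZMod 16)).val % 2 = (n % 2).toNat := by
  have h := ZMod.val_intCast (n := 16) n
  omega

private lemma sq_emod2 (a : ℤ) : a ^ 2 % 2 = a % 2 := by
  obtain ⟨q, hq⟩ : ∃ q, a = 2 * q + a % 2 := ⟨a / 2, by omega⟩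
  have h : a % 2 = 0 ∨ a % 2 = 1 := by omega
  rcases h with h | h <;> rw [h] at hq
  · rw [h, hq, show (2 * q + 0) ^ 2 = 2 * (2 * q ^ 2) by ring]
    exact Int.mul_emod_right 2 _
  · rw [h, hq, show (2 * q + 1) ^ 2 = 1 + 2 * (2 * q ^ 2 + 2 * q) by ring]
    rw [Int.add_mul_emod_self_left]; rfl

private lemma parity_transfer {a b c : ℤ} (h : a ^ 2 = b ^ 2 + 2 * c) : a % 2 = b % 2 := by
  have h1 : a ^ 2 % 2 = (b ^ 2 + 2 * c) % 2 := by rw [h]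
  rw [Int.add_mul_emod_self_left] at h1
  rw [sq_emod2, sq_emod2] at h1
  exact h1

private lemma exists_common_prime_dvd {a b : ℤ} (ha : a ≠ 0) (h : Int.gcd a b ≠ 1) :
    ∃ p : ℕ, p.Prime ∧ (p : ℤ) ∣ a ∧ (p : ℤ) ∣ b := by
  obtain ⟨p, hp, hpd⟩ := Nat.exists_prime_and_dvd h
  exact ⟨p, hp, (Int.natCast_dvd_natCast.mpr hpd).trans (Int.gcd_dvd_left _ _),
    (Int.natCast_dvd_natCast.mpr hpd).trans (Int.gcd_dvd_right _ _)⟩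

private lemma prime_not_dvd_one {p : ℕ} (hp : p.Prime) (h : (p : ℤ) ∣ ((1 : ℕ) : ℤ)) : False := by
  have : p ∣ 1 := by exact_mod_cast h
  exact hp.ne_one (Nat.dvd_one.mp this)

private lemma not_both_even {a b : ℤ} (h : Int.gcd a b = 1) : a % 2 = 1 ∨ b % 2 = 1 := by
  by_contra hc
  push_neg at hc
  have h2a : (2 : ℤ) ∣ a := by omega
  have h2b : (2 : ℤ) ∣ b := by omega
  have h2 := Int.dvd_gcd h2a h2b
  rw [h] at h2
  norm_num at h2

private lemma int_pow_split {k : ℕ} (hk : k ≠ 0) {x y z : ℤ} (hx : 0 < x) (hy : 0 < y)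
    (h : Int.gcd x y = 1) (heq : x * y = z ^ k) :
    ∃ a b : ℤ, 0 < a ∧ 0 < b ∧ x = a ^ k ∧ y = b ^ k ∧ a * b = (z.natAbs : ℤ) := by
  have hxy : x.natAbs * y.natAbs = z.natAbs ^ k := by
    rw [← Int.natAbs_mul, ← Int.natAbs_pow, heq]
  have hc : Nat.Coprime x.natAbs y.natAbs := h
  have hu1 : IsUnit (gcd x.natAbs y.natAbs) := Nat.isUnit_iff.mpr hc
  obtain ⟨d, hd⟩ := exists_eq_pow_of_mul_eq_pow hu1 hxy
  have hu2 : IsUnit (gcd y.natAbs x.natAbs) := Nat.isUnit_iff.mpr hc.symm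
  obtain ⟨e, he⟩ := exists_eq_pow_of_mul_eq_pow hu2 (by rwa [mul_comm] at hxy)
  have hde : d * e = z.natAbs := by
    apply Nat.pow_left_injective hk
    simp only [mul_pow]
    rw [← hd, ← he, hxy]
  have hd0 : d ≠ 0 := by
    rintro rfl
    rw [zero_pow hk] at hd
    omega
  have he0 : e ≠ 0 := by
    rintro rfl
    rw [zero_pow hk] at he
    omega
  have hxx : x = (x.natAbs : ℤ) := (Int.natAbs_of_nonneg hx.le).symm
  have hyy : y = (y.natAbs : ℤ) := (Int.natAbs_of_nonneg hy.le).symm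
  refine ⟨(d : ℤ), (e : ℤ), by positivity, by positivity, ?_, ?_, ?_⟩
  · rw [hxx, hd]; push_cast; ring
  · rw [hyy, he]; push_cast; ring
  · rw [← hde]; push_cast; ring

private lemma D1 : ∀ u e w : ZMod 16, u.val % 2 = 0 → e.val % 2 = 1 →
    w ^ 2 ≠ u ^ 4 + 22 * u ^ 2 * e ^ 2 + 125 * e ^ 4 := by decide

private lemma D2 : ∀ u r s : ZMod 16, u.val % 2 = 1 →
    u ^ 2 + 11 * (r * s) ^ 2 + s ^ 4 = r ^ 4 → r.val % 2 = 1 ∧ s.val % 2 = 0 := by decide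

private lemma D3 : ∀ r s : ZMod 5, (0 : ZMod 5) ^ 2 + 44 * (r * s) ^ 2 + 16 * s ^ 4 = r ^ 4 →
    r = 0 ∧ s = 0 := by decide

private lemma D4 : ∀ r a b : ZMod 16, r.val % 2 = 1 → (a.val % 2 = 1 ∨ b.val % 2 = 1) →
    r ^ 2 + a ^ 4 + 125 * b ^ 4 ≠ 22 * (a * b) ^ 2 := by decide

private lemma D5 : ∀ A t C : ZMod 5, C ^ 2 = 5 * A ^ 4 + 22 * (A * t) ^ 2 + 25 * t ^ 4 →
    A = 0 ∨ t = 0 := by decide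

private lemma D6 : ∀ A t C : ZMod 5, C ^ 2 = 25 * A ^ 4 + 22 * (A * t) ^ 2 + 5 * t ^ 4 →
    A = 0 ∨ t = 0 := by decide

private lemma Q1 : ∀ N : ℕ, ∀ u e w : ℤ, e.natAbs ≤ N → 0 < u → 0 < e → Int.gcd u e = 1 →
    w ^ 2 ≠ u ^ 4 + 22 * u ^ 2 * e ^ 2 + 125 * e ^ 4 := by
  intro N
  induction N using Nat.strong_induction_on with
  | _ N IH =>
  intro u e w hN hu he hg heq
  obtain ⟨w₀, hw₀, heq0⟩ : ∃ v : ℤ, 0 ≤ v ∧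
      v ^ 2 = u ^ 4 + 22 * u ^ 2 * e ^ 2 + 125 * e ^ 4 :=
    ⟨|w|, abs_nonneg w, by rw [sq_abs]; exact heq⟩
  clear heq
  -- u is odd
  have hu2 : u % 2 = 1 := by
    rcases not_both_even hg with h | h
    · exact h
    · rcases (by omega : u % 2 = 0 ∨ u % 2 = 1) with h0 | h1
      · exfalso
        have h16 : ((w₀ : ZMod 16)) ^ 2 = (u : ZMod 16) ^ 4 +
            22 * (u : ZMod 16) ^ 2 * (e : ZMod 16) ^ 2 + 125 * (e : ZMod 16) ^ 4 := by
          have h' := congrArg (fun z : ℤ => (z : ZMod 16)) heq0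
          push_cast at h'
          exact h'
        exact D1 _ _ _ (by rw [parity16, h0]; rfl) (by rw [parity16, h]; rfl) h16
      · exact h1
  -- first 2-adic factorization
  obtain ⟨A, hA⟩ : ∃ A : ℤ, A = u ^ 2 + 11 * e ^ 2 := ⟨_, rfl⟩
  have hApos : 0 < A := by rw [hA]; positivity
  have heq2 : w₀ ^ 2 = A ^ 2 + 2 * (2 * e ^ 4) := by rw [hA]; linear_combination heq0
  have hwA : A < w₀ := by
    by_contra hcon
    push_neg at hcon
    have h1 : w₀ ^ 2 ≤ A ^ 2 := pow_le_pow_left₀ hw₀ hcon 2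
    have h2 : 0 < e ^ 4 := pow_pos he 4
    linarith
  have hpar := parity_transfer heq2
  obtain ⟨k, hk, hk1⟩ : ∃ k : ℤ, w₀ = A + 2 * k ∧ 1 ≤ k := ⟨(w₀ - A) / 2, by omega, by omega⟩
  have hke : k * (A + k) = e ^ 4 := by
    rw [hk] at heq2
    have h4 : 4 * (k * (A + k)) = 4 * e ^ 4 := by linear_combination heq2
    linarith
  have hgk : Int.gcd k (A + k) = 1 := by
    by_contra hng
    obtain ⟨p, hp, hp1, hp2⟩ := exists_common_prime_dvd (by omega) hng
    have hpA : (p : ℤ) ∣ A := by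
      have h' := dvd_sub hp2 hp1
      simpa using h'
    have hpe : (p : ℤ) ∣ e := by
      refine Int.Prime.dvd_pow' hp (k := 4) ?_
      rw [← hke]
      exact hp1.mul_right (A + k)
    have hpu : (p : ℤ) ∣ u := by
      refine Int.Prime.dvd_pow' hp (k := 2) ?_
      have hu2eq : u ^ 2 = A - 11 * e ^ 2 := by rw [hA]; ring
      rw [hu2eq]
      exact dvd_sub hpA ((dvd_pow hpe two_ne_zero).mul_left 11)
    have hd := Int.dvd_gcd hpu hpe
    rw [hg] at hd
    exact prime_not_dvd_one hp (by exact_mod_cast hd)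
  obtain ⟨s, r, hs0, hr0, hsk, hrk, hsr⟩ :=
    int_pow_split (by norm_num) (by omega : (0:ℤ) < k) (by omega : (0:ℤ) < A + k) hgk hke
  have hsr' : s * r = e := by rw [hsr, Int.natAbs_of_nonneg he.le]
  have hstar : u ^ 2 + 11 * (r * s) ^ 2 + s ^ 4 = r ^ 4 := by
    linear_combination hrk - hA - hsk + 11 * (s * r + e) * hsr'
  have hgrs : Int.gcd r s = 1 := by
    by_contra hng
    obtain ⟨p, hp, hpr, hps⟩ := exists_common_prime_dvd (by omega) hng
    have hd := Int.dvd_gcd (by rw [hsk]; exact dvd_pow hps (by norm_num) : (p:ℤ) ∣ k)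
      (by rw [hrk]; exact dvd_pow hpr (by norm_num) : (p:ℤ) ∣ A + k)
    rw [hgk] at hd
    exact prime_not_dvd_one hp (by exact_mod_cast hd)
  -- parity of r and s
  have h16s : (u : ZMod 16) ^ 2 + 11 * ((r : ZMod 16) * (s : ZMod 16)) ^ 2 +
      (s : ZMod 16) ^ 4 = (r : ZMod 16) ^ 4 := by
    have h' := congrArg (fun z : ℤ => (z : ZMod 16)) hstar
    push_cast at h'
    exact h'
  obtain ⟨hrv, hsv⟩ := D2 _ _ _ (by rw [parity16, hu2]; rfl) h16s
  have hrodd : r % 2 = 1 := by rw [parity16] at hrv; omega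
  have hseven : s % 2 = 0 := by rw [parity16] at hsv; omega
  obtain ⟨s₁, hs₁⟩ : ∃ t : ℤ, s = 2 * t := ⟨s / 2, by omega⟩
  have hs₁0 : 0 < s₁ := by omega
  have hstar2 : u ^ 2 + 44 * (r * s₁) ^ 2 + 16 * s₁ ^ 4 = r ^ 4 := by
    rw [hs₁] at hstar
    linear_combination hstar
  -- 5 does not divide u
  have h5u : ¬ (5:ℤ) ∣ u := by
    intro h5
    have h50 : ((u : ZMod 5)) = 0 := (ZMod.intCast_zmod_eq_zero_iff_dvd u 5).mpr h5
    have h5eq : (0 : ZMod 5) ^ 2 + 44 * ((r : ZMod 5) * (s₁ : ZMod 5)) ^ 2 +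
        16 * (s₁ : ZMod 5) ^ 4 = (r : ZMod 5) ^ 4 := by
      have h' := congrArg (fun z : ℤ => (z : ZMod 5)) hstar2
      push_cast at h'
      rw [h50] at h'
      exact h'
    obtain ⟨hr5, hs5⟩ := D3 _ _ h5eq
    have hdr : (5:ℤ) ∣ r := (ZMod.intCast_zmod_eq_zero_iff_dvd r 5).mp hr5
    have hds : (5:ℤ) ∣ s := by
      rw [hs₁]
      exact ((ZMod.intCast_zmod_eq_zero_iff_dvd s₁ 5).mp hs5).mul_left 2
    have hd := Int.dvd_gcd hdr hds
    rw [hgrs] at hd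
    exact prime_not_dvd_one (p := 5) (by norm_num) (by exact_mod_cast hd)
  -- second 2-adic factorization
  obtain ⟨B, hB⟩ : ∃ B : ℤ, B = r ^ 2 - 22 * s₁ ^ 2 := ⟨_, rfl⟩
  have hBsq : B ^ 2 = u ^ 2 + 2 * (250 * s₁ ^ 4) := by
    rw [hB]; linear_combination (-1 : ℤ) * hstar2
  obtain ⟨C, hC0, hCB, hCsq⟩ : ∃ C : ℤ, 0 ≤ C ∧ (C = B ∨ C = -B) ∧
      C ^ 2 = u ^ 2 + 2 * (250 * s₁ ^ 4) := by
    rcases le_or_gt 0 B with hB0 | hB0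
    · exact ⟨B, hB0, Or.inl rfl, hBsq⟩
    · exact ⟨-B, by omega, Or.inr rfl, by rw [show (-B) ^ 2 = B ^ 2 by ring]; exact hBsq⟩
  have hCu : u < C := by
    by_contra hcon
    push_neg at hcon
    have h1 : C ^ 2 ≤ u ^ 2 := pow_le_pow_left₀ hC0 hcon 2
    have h2 : 0 < s₁ ^ 4 := pow_pos hs₁0 4
    linarith
  have hCpar : C % 2 = 1 := by rw [parity_transfer hCsq]; exact hu2
  obtain ⟨m, hm, hm1⟩ : ∃ m : ℤ, C = u + 2 * m ∧ 1 ≤ m := ⟨(C - u) / 2, by omega, by omega⟩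
  have hmeq : m * (u + m) = 125 * s₁ ^ 4 := by
    rw [hm] at hCsq
    have h4 : 4 * (m * (u + m)) = 4 * (125 * s₁ ^ 4) := by linear_combination hCsq
    linarith
  have hgmu : Int.gcd m (u + m) = 1 := by
    by_contra hng
    obtain ⟨p, hp, hpm, hpum⟩ := exists_common_prime_dvd (by omega) hng
    have hpu : (p:ℤ) ∣ u := by
      have h' := dvd_sub hpum hpm
      simpa using h'
    have hpC : (p:ℤ) ∣ C := by
      rw [hm]
      exact dvd_add hpu (hpm.mul_left 2)
    have hp125 : (p:ℤ) ∣ 125 * s₁ ^ 4 := by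
      rw [← hmeq]
      exact hpm.mul_right (u + m)
    rcases Int.Prime.dvd_mul' hp hp125 with h125 | hs4
    · have hp5 : (p:ℕ) ∣ 125 := by exact_mod_cast h125
      have hp5' : p = 5 := by
        have hd : p ∣ 5 ^ 3 := by norm_num at hp5 ⊢; exact hp5
        have := Nat.Prime.dvd_of_dvd_pow hp hd
        exact (Nat.prime_dvd_prime_iff_eq hp (by norm_num)).mp this
      rw [hp5'] at hpu
      exact h5u (by exact_mod_cast hpu)
    · have hps1 : (p:ℤ) ∣ s₁ := Int.Prime.dvd_pow' hp hs4
      have hpB : (p:ℤ) ∣ B := by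
        rcases hCB with h' | h'
        · rwa [h'] at hpC
        · rw [h'] at hpC; exact (dvd_neg).mp hpC
      have hpr : (p:ℤ) ∣ r := by
        refine Int.Prime.dvd_pow' hp (k := 2) ?_
        have hr2eq : r ^ 2 = B + 22 * s₁ ^ 2 := by rw [hB]; ring
        rw [hr2eq]
        exact dvd_add hpB ((dvd_pow hps1 two_ne_zero).mul_left 22)
      have hps : (p:ℤ) ∣ s := by rw [hs₁]; exact hps1.mul_left 2
      have hd := Int.dvd_gcd hpr hps
      rw [hgrs] at hd
      exact prime_not_dvd_one hp (by exact_mod_cast hd)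
  -- 5-power splitting
  have key : ∃ a b : ℤ, 0 < a ∧ 0 < b ∧ a * b = s₁ ∧ Int.gcd a b = 1 ∧
      C = a ^ 4 + 125 * b ^ 4 := by
    have h5prime : Prime (5:ℤ) := by norm_num
    rcases em ((5:ℤ) ∣ m) with h5m | h5m
    · -- 5 ∣ m, so 125 ∣ m ; u + m = a^4
      have h5um : ¬ (5:ℤ) ∣ (u + m) := by
        intro hd
        have h' := dvd_sub hd h5m
        simp only [add_sub_cancel_right] at h'
        exact h5u h'
      have h125m : (125:ℤ) ∣ m := by
        have hcop : IsCoprime ((5:ℤ) ^ 3) (u + m) :=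
          IsCoprime.pow_left (h5prime.coprime_iff_not_dvd.mpr h5um)
        have hdm : (5:ℤ) ^ 3 ∣ m * (u + m) := by
          rw [hmeq]
          exact ⟨s₁ ^ 4, by ring⟩
        have := hcop.dvd_of_dvd_mul_right hdm
        exact_mod_cast this
      obtain ⟨k₂, hk₂⟩ := h125m
      have hk₂pos : 0 < k₂ := by omega
      have hsplit : k₂ * (u + m) = s₁ ^ 4 := by
        have h' : 125 * (k₂ * (u + m)) = 125 * s₁ ^ 4 := by
          rw [← hmeq, hk₂]; ring
        linarith
      have hgk₂ : Int.gcd k₂ (u + m) = 1 := by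
        by_contra hng
        obtain ⟨p, hp, hp1, hp2⟩ := exists_common_prime_dvd (by omega) hng
        have hpm : (p:ℤ) ∣ m := by rw [hk₂]; exact hp1.mul_left 125
        have hd := Int.dvd_gcd hpm hp2
        rw [hgmu] at hd
        exact prime_not_dvd_one hp (by exact_mod_cast hd)
      obtain ⟨b, a, hb0', ha0', hbk, hak, hba⟩ :=
        int_pow_split (by norm_num) hk₂pos (by omega : (0:ℤ) < u + m) hgk₂ hsplit
      have hba' : b * a = s₁ := by rw [hba, Int.natAbs_of_nonneg hs₁0.le]
      refine ⟨a, b, ha0', hb0', by rw [mul_comm]; exact hba', ?_, ?_⟩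
      · -- gcd a b = 1
        by_contra hng
        obtain ⟨p, hp, hpa, hpb⟩ := exists_common_prime_dvd (by omega) hng
        have hp1 : (p:ℤ) ∣ u + m := by rw [hak]; exact dvd_pow hpa (by norm_num)
        have hp2 : (p:ℤ) ∣ m := by
          rw [hk₂, hbk]
          exact (dvd_pow hpb (by norm_num)).mul_left 125
        have hd := Int.dvd_gcd hp2 hp1
        rw [hgmu] at hd
        exact prime_not_dvd_one hp (by exact_mod_cast hd)
      · linear_combination hm + hak + 125 * hbk + hk₂
    · -- 5 ∤ m : 125 ∣ u + m
      have h125um : (125:ℤ) ∣ (u + m) := by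
        have hcop : IsCoprime ((5:ℤ) ^ 3) m :=
          IsCoprime.pow_left (h5prime.coprime_iff_not_dvd.mpr h5m)
        have hdm : (5:ℤ) ^ 3 ∣ m * (u + m) := by
          rw [hmeq]
          exact ⟨s₁ ^ 4, by ring⟩
        have := hcop.dvd_of_dvd_mul_left (by rwa [mul_comm] at hdm)
        exact_mod_cast this
      obtain ⟨k₂, hk₂⟩ := h125um
      have hk₂pos : 0 < k₂ := by omega
      have hsplit : m * k₂ = s₁ ^ 4 := by
        have h' : 125 * (m * k₂) = 125 * s₁ ^ 4 := by
          rw [← hmeq, hk₂]; ring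
        linarith
      have hgk₂ : Int.gcd m k₂ = 1 := by
        by_contra hng
        obtain ⟨p, hp, hp1, hp2⟩ := exists_common_prime_dvd (by omega) hng
        have hpum : (p:ℤ) ∣ u + m := by rw [hk₂]; exact hp2.mul_left 125
        have hd := Int.dvd_gcd hp1 hpum
        rw [hgmu] at hd
        exact prime_not_dvd_one hp (by exact_mod_cast hd)
      obtain ⟨a, b, ha0', hb0', hak, hbk, hab⟩ :=
        int_pow_split (by norm_num) (by omega : (0:ℤ) < m) hk₂pos hgk₂ hsplit
      have hab' : a * b = s₁ := by rw [hab, Int.natAbs_of_nonneg hs₁0.le]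
      refine ⟨a, b, ha0', hb0', hab', ?_, ?_⟩
      · by_contra hng
        obtain ⟨p, hp, hpa, hpb⟩ := exists_common_prime_dvd (by omega) hng
        have hp1 : (p:ℤ) ∣ m := by rw [hak]; exact dvd_pow hpa (by norm_num)
        have hp2 : (p:ℤ) ∣ u + m := by
          rw [hk₂, hbk]
          exact (dvd_pow hpb (by norm_num)).mul_left 125
        have hd := Int.dvd_gcd hp1 hp2
        rw [hgmu] at hd
        exact prime_not_dvd_one hp (by exact_mod_cast hd)
      · linear_combination hm + hk₂ + hak + 125 * hbk
  obtain ⟨a, b, ha0, hb0, hab, hgab, hCval⟩ := key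
  rcases hCB with hCB | hCB
  · -- C = B : descent to a smaller solution
    have hQ : r ^ 2 = a ^ 4 + 22 * a ^ 2 * b ^ 2 + 125 * b ^ 4 := by
      linear_combination (-1 : ℤ) * hB - hCB + hCval - 22 * (a * b + s₁) * hab
    have he' : e = 2 * (a * b) * r := by
      linear_combination (-1 : ℤ) * hsr' + r * hs₁ - 2 * r * hab
    have har : 1 ≤ a * r := by
      have h1 : (1:ℤ) * 1 ≤ a * r :=
        mul_le_mul (by omega) (by omega) (by norm_num) (by omega)
      linarith
    have hbe : b < e := by
      have h2 : b * 1 ≤ b * (a * r) := mul_le_mul_of_nonneg_left har hb0.le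
      have h3 : e = 2 * (b * (a * r)) := by rw [he']; ring
      have h4 : 0 < b * (a * r) := by
        have := lt_of_lt_of_le zero_lt_one har
        exact mul_pos hb0 this
      linarith
    have hlt : b.natAbs < N := by omega
    exact IH b.natAbs hlt a b r le_rfl ha0 hb0 hgab hQ
  · have hQ2 : r ^ 2 + a ^ 4 + 125 * b ^ 4 = 22 * (a * b) ^ 2 := by
      linear_combination (-1 : ℤ) * hB + hCB - hCval - 22 * (a * b + s₁) * hab
    have h16f : (r : ZMod 16) ^ 2 + (a : ZMod 16) ^ 4 + 125 * (b : ZMod 16) ^ 4 =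
        22 * ((a : ZMod 16) * (b : ZMod 16)) ^ 2 := by
      have h' := congrArg (fun z : ℤ => (z : ZMod 16)) hQ2
      push_cast at h'
      exact h'
    refine D4 _ _ _ (by rw [parity16, hrodd]; rfl) ?_ h16f
    rcases not_both_even hgab with h' | h'
    · exact Or.inl (by rw [parity16, h']; rfl)
    · exact Or.inr (by rw [parity16, h']; rfl)

/-- The elliptic curve `C₅ : y² = x(x² + 22x + 125)` over `ℚ` has exactly one affine rational
point, namely `(0, 0)`. -/
theorem C5_rational_points :
    {p : ℚ × ℚ | p.2 ^ 2 = p.1 * (p.1 ^ 2 + 22 * p.1 + 125)} = {(0, 0)} := by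
  ext ⟨x, y⟩
  simp only [Set.mem_setOf_eq, Set.mem_singleton_iff, Prod.mk.injEq]
  constructor
  · intro h
    have hx : x = 0 := by
      by_contra hx0
      have hxpos : 0 < x := by
        rcases lt_trichotomy x 0 with hneg | h0 | hpos
        · exfalso
          have h5 : x * (x + 11) ^ 2 ≤ 0 :=
            mul_nonpos_of_nonpos_of_nonneg hneg.le (sq_nonneg (x + 11))
          have h6 : y ^ 2 = x * (x + 11) ^ 2 + 4 * x := by linear_combination h
          nlinarith [sq_nonneg y]
        · exact absurd h0 hx0
        · exact hpos
      -- cast to integers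
      have hp : 0 < x.num := Rat.num_pos.mpr hxpos
      have hqN : 0 < (x.den : ℤ) := by exact_mod_cast x.pos
      have hbN : 0 < (y.den : ℤ) := by exact_mod_cast y.pos
      have hdx : ((x.den : ℤ) : ℚ) ≠ 0 := by
        push_cast
        exact_mod_cast Nat.cast_ne_zero.mpr x.den_nz
      have hdy : ((y.den : ℤ) : ℚ) ≠ 0 := by
        push_cast
        exact_mod_cast Nat.cast_ne_zero.mpr y.den_nz
      have hx' : (x.num : ℚ) = x * ((x.den : ℤ) : ℚ) := by
        have h0 := Rat.num_div_den x
        push_cast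
        exact (div_eq_iff (by exact_mod_cast Nat.cast_ne_zero.mpr x.den_nz)).mp h0
      have hy' : (y.num : ℚ) = y * ((y.den : ℤ) : ℚ) := by
        have h0 := Rat.num_div_den y
        push_cast
        exact (div_eq_iff (by exact_mod_cast Nat.cast_ne_zero.mpr y.den_nz)).mp h0
      have hkey : ((y.num : ℚ)) ^ 2 * ((x.den : ℤ) : ℚ) ^ 3 =
          ((x.num : ℚ) ^ 3 + 22 * (x.num : ℚ) ^ 2 * ((x.den : ℤ) : ℚ) +
            125 * (x.num : ℚ) * ((x.den : ℤ) : ℚ) ^ 2) * ((y.den : ℤ) : ℚ) ^ 2 := by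
        linear_combination ((y.num : ℚ) + y * ((y.den : ℤ) : ℚ)) * ((x.den : ℤ) : ℚ) ^ 3 * hy' +
          ((y.den : ℤ) : ℚ) ^ 2 * ((x.den : ℤ) : ℚ) ^ 3 * h -
          ((y.den : ℤ) : ℚ) ^ 2 * ((x.num : ℚ) ^ 2 + (x.num : ℚ) * x * ((x.den : ℤ) : ℚ) +
            x ^ 2 * ((x.den : ℤ) : ℚ) ^ 2 + 22 * ((x.den : ℤ) : ℚ) * ((x.num : ℚ) + x * ((x.den : ℤ) : ℚ)) +
            125 * ((x.den : ℤ) : ℚ) ^ 2) * hx'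
      have hZ : y.num ^ 2 * (x.den : ℤ) ^ 3 =
          (x.num ^ 3 + 22 * x.num ^ 2 * (x.den : ℤ) + 125 * x.num * (x.den : ℤ) ^ 2) *
            (y.den : ℤ) ^ 2 := by exact_mod_cast hkey
      -- b^2 = q^3
      have hco_pq : IsCoprime (x.num) ((x.den : ℤ)) := by
        rw [Int.isCoprime_iff_nat_coprime]
        simpa using x.reduced
      have hco_ab : IsCoprime (y.num) ((y.den : ℤ)) := by
        rw [Int.isCoprime_iff_nat_coprime]
        simpa using y.reduced
      have hd1 : (y.den : ℤ) ^ 2 ∣ (x.den : ℤ) ^ 3 := by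
        have h1 : (y.den : ℤ) ^ 2 ∣ y.num ^ 2 * (x.den : ℤ) ^ 3 :=
          ⟨x.num ^ 3 + 22 * x.num ^ 2 * (x.den : ℤ) + 125 * x.num * (x.den : ℤ) ^ 2,
            by linear_combination hZ⟩
        exact (IsCoprime.pow (hco_ab.symm)).dvd_of_dvd_mul_left h1
      have hd2 : (x.den : ℤ) ^ 3 ∣ (y.den : ℤ) ^ 2 := by
        have h2 : (x.den : ℤ) ^ 3 ∣ (x.num ^ 3 + 22 * x.num ^ 2 * (x.den : ℤ) +
            125 * x.num * (x.den : ℤ) ^ 2) * (y.den : ℤ) ^ 2 :=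
          ⟨y.num ^ 2, by linear_combination (-1 : ℤ) * hZ⟩
        have hcN : IsCoprime ((x.den : ℤ) ^ 3) (x.num ^ 3 + 22 * x.num ^ 2 * (x.den : ℤ) +
            125 * x.num * (x.den : ℤ) ^ 2) := by
          have hbase : IsCoprime ((x.den : ℤ)) (x.num ^ 3) := (hco_pq.symm).pow_right
          have := hbase.add_mul_left_right (22 * x.num ^ 2 + 125 * x.num * (x.den : ℤ))
          have h3 : x.num ^ 3 + (x.den : ℤ) * (22 * x.num ^ 2 + 125 * x.num * (x.den : ℤ)) =
              x.num ^ 3 + 22 * x.num ^ 2 * (x.den : ℤ) + 125 * x.num * (x.den : ℤ) ^ 2 := by ring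
          rw [h3] at this
          exact this.pow_left
        exact hcN.dvd_of_dvd_mul_right (by rwa [mul_comm] at h2)
      have hbq : (y.den : ℤ) ^ 2 = (x.den : ℤ) ^ 3 :=
        Int.dvd_antisymm (by positivity) (by positivity) hd1 hd2
      have hqb : (x.den : ℤ) ∣ (y.den : ℤ) := by
        have h4 : (x.den : ℤ) ^ 2 ∣ (y.den : ℤ) ^ 2 := by
          rw [hbq]
          exact ⟨(x.den : ℤ), by ring⟩
        exact (Int.pow_dvd_pow_iff two_ne_zero).mp h4
      obtain ⟨t, ht⟩ := hqb
      have ht0 : 0 < t := by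
        have hbt : 0 < (x.den : ℤ) * t := ht ▸ hbN
        rcases mul_pos_iff.mp hbt with ⟨_, h'⟩ | ⟨h', _⟩
        · exact h'
        · linarith
      have hqt : (x.den : ℤ) = t ^ 2 := by
        have h9 : (x.den : ℤ) ^ 2 * (x.den : ℤ) = (x.den : ℤ) ^ 2 * t ^ 2 := by
          linear_combination (-1 : ℤ) * hbq + ((y.den : ℤ) + (x.den : ℤ) * t) * ht
        exact mul_left_cancel₀ (pow_ne_zero 2 hqN.ne') h9
      have ha2 : y.num ^ 2 = x.num * (x.num ^ 2 + 22 * x.num * t ^ 2 + 125 * t ^ 4) := by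
        have h9 : y.num ^ 2 * (x.den : ℤ) ^ 3 =
            (x.num * (x.num ^ 2 + 22 * x.num * t ^ 2 + 125 * t ^ 4)) * (x.den : ℤ) ^ 3 := by
          linear_combination hZ +
            (x.num ^ 3 + 22 * x.num ^ 2 * (x.den : ℤ) + 125 * x.num * (x.den : ℤ) ^ 2) * hbq +
            (x.den : ℤ) ^ 3 * (22 * x.num ^ 2 + 125 * x.num * ((x.den : ℤ) + t ^ 2)) * hqt
        exact mul_right_cancel₀ (pow_ne_zero 3 hqN.ne') h9
      have hptN : Nat.Coprime x.num.natAbs t.natAbs := by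
        have hdvd : t.natAbs ∣ (x.den : ℤ).natAbs :=
          Int.natAbs_dvd_natAbs.mpr ⟨t, by linear_combination hqt⟩
        have hxq : Nat.Coprime x.num.natAbs (x.den : ℤ).natAbs := by simpa using x.reduced
        exact Nat.Coprime.coprime_dvd_right hdvd hxq
      have hpt : Int.gcd x.num t = 1 := hptN
      obtain ⟨K, hK⟩ : ∃ K : ℤ, K = x.num ^ 2 + 22 * x.num * t ^ 2 + 125 * t ^ 4 := ⟨_, rfl⟩
      have hKpos : 0 < K := by rw [hK]; positivity
      have ha2' : y.num ^ 2 = x.num * K := by rw [hK]; exact ha2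
      -- gcd p K divides 125
      set g := Int.gcd x.num K with hgdef
      have hgdl : ((g : ℕ) : ℤ) ∣ x.num := Int.gcd_dvd_left _ _
      have hgdr : ((g : ℕ) : ℤ) ∣ K := Int.gcd_dvd_right _ _
      have hgpos : 0 < g := Int.gcd_pos_of_ne_zero_left K hp.ne'
      have hg0 : ((g : ℕ) : ℤ) ≠ 0 := by exact_mod_cast hgpos.ne'
      have hg125 : g ∣ 125 := by
        have h1 : ((g : ℕ) : ℤ) ∣ 125 * t ^ 4 := by
          have h2 : 125 * t ^ 4 = K - x.num * (x.num + 22 * t ^ 2) := by rw [hK]; ring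
          rw [h2]
          exact dvd_sub hgdr (hgdl.mul_right _)
        have h3 : g ∣ (125 * t ^ 4 : ℤ).natAbs := Int.natCast_dvd.mp h1
        have h4 : (125 * t ^ 4 : ℤ).natAbs = 125 * t.natAbs ^ 4 := by
          rw [Int.natAbs_mul, Int.natAbs_pow]
          rfl
        rw [h4] at h3
        have hgt : Nat.Coprime g t.natAbs :=
          Nat.Coprime.coprime_dvd_left (Int.natCast_dvd.mp hgdl) hptN
        exact (Nat.Coprime.pow_right 4 hgt).dvd_of_dvd_mul_right h3
      have hg125' : g ∣ 5 ^ 3 := by rwa [show (125 : ℕ) = 5 ^ 3 by norm_num] at hg125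
      obtain ⟨i, hi3, hgi⟩ := (Nat.dvd_prime_pow (by norm_num : Nat.Prime 5)).mp hg125'
      -- split p = g * A^2, K = g * C^2
      obtain ⟨p₁, hp₁⟩ := hgdl
      obtain ⟨K₁, hK₁⟩ := hgdr
      have hp₁pos : 0 < p₁ := by
        rcases mul_pos_iff.mp (hp₁ ▸ hp) with ⟨_, h'⟩ | ⟨h', _⟩
        · exact h'
        · exfalso
          have : (0:ℤ) < (g : ℕ) := by exact_mod_cast hgpos
          linarith
      have hK₁pos : 0 < K₁ := by
        rcases mul_pos_iff.mp (hK₁ ▸ hKpos) with ⟨_, h'⟩ | ⟨h', _⟩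
        · exact h'
        · exfalso
          have : (0:ℤ) < (g : ℕ) := by exact_mod_cast hgpos
          linarith
      have hgPK : Int.gcd p₁ K₁ = 1 := by
        have h5 := Int.gcd_div_gcd_div_gcd (i := x.num) (j := K) hgpos
        have e1 : x.num / ((g : ℕ) : ℤ) = p₁ := by
          rw [hp₁]
          exact Int.mul_ediv_cancel_left _ hg0
        have e2 : K / ((g : ℕ) : ℤ) = K₁ := by
          rw [hK₁]
          exact Int.mul_ediv_cancel_left _ hg0
        rwa [← hgdef, e1, e2] at h5
      have hga : ((g : ℕ) : ℤ) ∣ y.num := by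
        have h1 : ((g : ℕ) : ℤ) ^ 2 ∣ y.num ^ 2 :=
          ⟨p₁ * K₁, by rw [ha2', hp₁, hK₁]; ring⟩
        exact (Int.pow_dvd_pow_iff two_ne_zero).mp h1
      obtain ⟨a₁, ha₁⟩ := hga
      have ha₁2 : p₁ * K₁ = a₁ ^ 2 := by
        have h9 : ((g : ℕ) : ℤ) ^ 2 * (p₁ * K₁) = ((g : ℕ) : ℤ) ^ 2 * a₁ ^ 2 := by
          have h10 := ha2'
          rw [ha₁, hp₁, hK₁] at h10
          linear_combination (-1 : ℤ) * h10
        exact mul_left_cancel₀ (pow_ne_zero 2 hg0) h9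
      obtain ⟨A, C, hA0, hC0, hpA, hKC, -⟩ :=
        int_pow_split two_ne_zero hp₁pos hK₁pos hgPK ha₁2
      -- the master equation
      have hbig : ((g : ℕ) : ℤ) * C ^ 2 =
          (((g : ℕ) : ℤ) * A ^ 2) ^ 2 + 22 * (((g : ℕ) : ℤ) * A ^ 2) * t ^ 2 + 125 * t ^ 4 := by
        rw [← hpA, ← hp₁, ← hKC, ← hK₁]
        exact hK
      have hAt : Int.gcd A t = 1 := by
        by_contra hng
        obtain ⟨π, hπ, h1, h2⟩ := exists_common_prime_dvd hA0.ne' hng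
        have h3 : (π : ℤ) ∣ x.num := by
          rw [hp₁, hpA]
          exact ((dvd_pow h1 two_ne_zero).mul_left _)
        have hd := Int.dvd_gcd h3 h2
        rw [hpt] at hd
        exact prime_not_dvd_one hπ (by exact_mod_cast hd)
      -- case analysis on g = 5^i
      interval_cases i
      · -- g = 1
        rw [pow_zero] at hgi
        rw [hgi] at hbig
        push_cast at hbig
        have hQ : C ^ 2 = A ^ 4 + 22 * A ^ 2 * t ^ 2 + 125 * t ^ 4 := by
          linear_combination hbig
        exact Q1 t.natAbs A t C le_rfl hA0 ht0 hAt hQ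
      · -- g = 5
        rw [pow_one] at hgi
        rw [hgi] at hbig
        push_cast at hbig
        have hq5 : C ^ 2 = 5 * A ^ 4 + 22 * A ^ 2 * t ^ 2 + 25 * t ^ 4 := by
          have h5' : 5 * C ^ 2 = 5 * (5 * A ^ 4 + 22 * A ^ 2 * t ^ 2 + 25 * t ^ 4) := by
            linear_combination hbig
          linarith
        have h5p : (5 : ℤ) ∣ x.num := by
          rw [hp₁, hgi]
          push_cast
          exact ⟨p₁, rfl⟩
        have h5eq : ((C : ZMod 5)) ^ 2 = 5 * (A : ZMod 5) ^ 4 +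
            22 * ((A : ZMod 5) * (t : ZMod 5)) ^ 2 + 25 * (t : ZMod 5) ^ 4 := by
          have h' := congrArg (fun z : ℤ => (z : ZMod 5)) hq5
          push_cast at h'
          linear_combination h'
        rcases D5 _ _ _ h5eq with hA5 | ht5
        · -- 5 ∣ A
          have hA5d : (5 : ℤ) ∣ A := by
            exact_mod_cast (ZMod.intCast_zmod_eq_zero_iff_dvd A 5).mp hA5
          obtain ⟨A₁, rfl⟩ := hA5d
          have h5C : (5 : ℤ) ∣ C := by
            have h1 : (5:ℤ) ∣ C ^ 2 :=
              ⟨625 * A₁ ^ 4 + 110 * A₁ ^ 2 * t ^ 2 + 5 * t ^ 4, by linear_combination hq5⟩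
            exact Int.Prime.dvd_pow' (by norm_num) h1
          obtain ⟨C₁, rfl⟩ := h5C
          have hQ2 : C₁ ^ 2 = t ^ 4 + 22 * t ^ 2 * A₁ ^ 2 + 125 * A₁ ^ 4 := by
            have h25 : 25 * C₁ ^ 2 = 25 * (t ^ 4 + 22 * t ^ 2 * A₁ ^ 2 + 125 * A₁ ^ 4) := by
              linear_combination hq5
            linarith
          have hA₁0 : 0 < A₁ := by linarith
          have hgtA : Int.gcd t A₁ = 1 := by
            by_contra hng
            obtain ⟨π, hπ, h1, h2⟩ := exists_common_prime_dvd ht0.ne' hng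
            have h3 : (π : ℤ) ∣ x.num := by
              rw [hp₁, hpA]
              exact (dvd_pow (h2.mul_left 5) two_ne_zero).mul_left _
            have hd := Int.dvd_gcd h3 h1
            rw [hpt] at hd
            exact prime_not_dvd_one hπ (by exact_mod_cast hd)
          exact Q1 A₁.natAbs t A₁ C₁ le_rfl ht0 hA₁0 hgtA hQ2
        · -- 5 ∣ t : contradiction with gcd p t
          have h5t : (5 : ℤ) ∣ t := by
            exact_mod_cast (ZMod.intCast_zmod_eq_zero_iff_dvd t 5).mp ht5
          have hd := Int.dvd_gcd h5p h5t
          rw [hpt] at hd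
          exact prime_not_dvd_one (p := 5) (by norm_num) (by exact_mod_cast hd)
      · -- g = 25
        rw [hgi] at hbig
        push_cast at hbig
        have hq25 : C ^ 2 = 25 * A ^ 4 + 22 * A ^ 2 * t ^ 2 + 5 * t ^ 4 := by
          have h5' : 25 * C ^ 2 = 25 * (25 * A ^ 4 + 22 * A ^ 2 * t ^ 2 + 5 * t ^ 4) := by
            linear_combination hbig
          linarith
        have h5p : (5 : ℤ) ∣ x.num := by
          rw [hp₁, hgi]
          push_cast
          exact ⟨5 * p₁, by ring⟩
        have h5eq : ((C : ZMod 5)) ^ 2 = 25 * (A : ZMod 5) ^ 4 +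
            22 * ((A : ZMod 5) * (t : ZMod 5)) ^ 2 + 5 * (t : ZMod 5) ^ 4 := by
          have h' := congrArg (fun z : ℤ => (z : ZMod 5)) hq25
          push_cast at h'
          linear_combination h'
        rcases D6 _ _ _ h5eq with hA5 | ht5
        · have hA5d : (5 : ℤ) ∣ A := by
            exact_mod_cast (ZMod.intCast_zmod_eq_zero_iff_dvd A 5).mp hA5
          obtain ⟨A₁, rfl⟩ := hA5d
          have h5C : (5 : ℤ) ∣ C := by
            have h1 : (5:ℤ) ∣ C ^ 2 :=
              ⟨3125 * A₁ ^ 4 + 110 * A₁ ^ 2 * t ^ 2 + t ^ 4, by linear_combination hq25⟩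
            exact Int.Prime.dvd_pow' (by norm_num) h1
          obtain ⟨C₁, rfl⟩ := h5C
          have hlin : 5 * C₁ ^ 2 = 3125 * A₁ ^ 4 + 110 * A₁ ^ 2 * t ^ 2 + t ^ 4 := by
            have h5' : 5 * (5 * C₁ ^ 2) =
                5 * (3125 * A₁ ^ 4 + 110 * A₁ ^ 2 * t ^ 2 + t ^ 4) := by
              linear_combination hq25
            linarith
          have h5t : (5 : ℤ) ∣ t := by
            have h1 : (5:ℤ) ∣ t ^ 4 :=
              ⟨C₁ ^ 2 - 625 * A₁ ^ 4 - 22 * A₁ ^ 2 * t ^ 2, by linear_combination (-1 : ℤ) * hlin⟩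
            exact Int.Prime.dvd_pow' (by norm_num) h1
          have hd := Int.dvd_gcd h5p h5t
          rw [hpt] at hd
          exact prime_not_dvd_one (p := 5) (by norm_num) (by exact_mod_cast hd)
        · have h5t : (5 : ℤ) ∣ t := by
            exact_mod_cast (ZMod.intCast_zmod_eq_zero_iff_dvd t 5).mp ht5
          have hd := Int.dvd_gcd h5p h5t
          rw [hpt] at hd
          exact prime_not_dvd_one (p := 5) (by norm_num) (by exact_mod_cast hd)
      · -- g = 125
        rw [hgi] at hbig
        push_cast at hbig
        have hQ : C ^ 2 = t ^ 4 + 22 * t ^ 2 * A ^ 2 + 125 * A ^ 4 := by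
          have h5' : 125 * C ^ 2 = 125 * (t ^ 4 + 22 * t ^ 2 * A ^ 2 + 125 * A ^ 4) := by
            linear_combination hbig
          linarith
        have hgtA : Int.gcd t A = 1 := by
          by_contra hng
          obtain ⟨π, hπ, h1, h2⟩ := exists_common_prime_dvd ht0.ne' hng
          have h3 : (π : ℤ) ∣ x.num := by
            rw [hp₁, hpA]
            exact (dvd_pow h2 two_ne_zero).mul_left _
          have hd := Int.dvd_gcd h3 h1
          rw [hpt] at hd
          exact prime_not_dvd_one hπ (by exact_mod_cast hd)
        exact Q1 A.natAbs t A C le_rfl ht0 hA0 hgtA hQ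
    refine ⟨hx, ?_⟩
    rw [hx] at h
    norm_num at h
    exact h
  · rintro ⟨rfl, rfl⟩
    norm_num
end

section
/- The genus-one curve C₁₀ : y² = x(x−4)(x²+4) over ℚ has exactly four affine rational points: (4, 0), (0, 0), (−1, 5), and (−1, −5). -/
lemma odd_sq_mod8 (x : ℤ) (h : Odd x) : ∃ t, x ^ 2 = 8 * t + 1 := by
  obtain ⟨k, rfl⟩ := h
  obtain ⟨t, ht⟩ := Int.even_mul_succ_self k
  exact ⟨t, by nlinarith [ht]⟩

lemma sq_pos_split (G : ℤ) (g0 : ℤ) (hG : 0 < G) (h : G = g0 ^ 2 ∨ G = -g0 ^ 2) :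
    0 < |g0| ∧ G = |g0| ^ 2 := by
  have hne : g0 ≠ 0 := by rintro rfl; simp at h; omega
  refine ⟨abs_pos.mpr hne, ?_⟩
  rcases h with h1 | h1
  · rw [h1, sq_abs]
  · nlinarith [sq_nonneg g0]

lemma sq_pos_split' (G : ℤ) (g0 : ℤ) (hG : 0 < G) (h : G = g0 ^ 2 ∨ G = -g0 ^ 2) :
    ∃ k : ℤ, 0 < k ∧ G = k ^ 2 :=
  ⟨|g0|, (sq_pos_split G g0 hG h).1, (sq_pos_split G g0 hG h).2⟩

lemma split_pow4 (G B q : ℤ) (hG : 0 < G) (hB : 0 < B) (hcop : IsCoprime G B)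
    (h : G * B = q ^ 4) (hq : q ≠ 0) :
    ∃ a b : ℤ, 0 < a ∧ 0 < b ∧ a ^ 2 * b ^ 2 = q ^ 2 ∧ IsCoprime a b ∧ G = a ^ 4 ∧ B = b ^ 4 := by
  have h4 : G * B = (q ^ 2) ^ 2 := by rw [h]; ring
  obtain ⟨g0, hg0⟩ := Int.sq_of_isCoprime hcop h4
  obtain ⟨s0, hs0⟩ := Int.sq_of_isCoprime hcop.symm (by rw [mul_comm] at h4; exact h4)
  obtain ⟨hgpos, hg⟩ := sq_pos_split G g0 hG hg0
  obtain ⟨hspos, hs⟩ := sq_pos_split B s0 hB hs0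
  set g := |g0|
  set s := |s0|
  have hcgs : IsCoprime g s := by
    have := hcop
    rw [hg, hs, IsCoprime.pow_left_iff two_pos, IsCoprime.pow_right_iff two_pos] at this
    exact this
  have hgs : g * s = q ^ 2 := by
    have h5 : (g * s - q ^ 2) * (g * s + q ^ 2) = 0 := by
      have : g ^ 2 * s ^ 2 = q ^ 4 := by rw [← hg, ← hs]; exact h
      nlinarith [this]
    rcases mul_eq_zero.mp h5 with h6 | h6
    · linarith
    · nlinarith [sq_nonneg q, mul_pos hgpos hspos]
  obtain ⟨a0, ha0⟩ := Int.sq_of_isCoprime hcgs (by rw [hgs])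
  obtain ⟨b0, hb0⟩ := Int.sq_of_isCoprime hcgs.symm (by rw [mul_comm]; exact hgs)
  obtain ⟨hapos, ha⟩ := sq_pos_split g a0 hgpos ha0
  obtain ⟨hbpos, hb⟩ := sq_pos_split s b0 hspos hb0
  refine ⟨|a0|, |b0|, hapos, hbpos, ?_, ?_, ?_, ?_⟩
  · rw [← ha, ← hb]; exact hgs
  · have := hcgs
    rw [ha, hb, IsCoprime.pow_left_iff two_pos, IsCoprime.pow_right_iff two_pos] at this
    exact this
  · rw [hg, ha]; ring
  · rw [hs, hb]; ring

lemma five_split (A B q : ℤ) (hA : 0 < A) (hB : 0 < B) (hcop : IsCoprime A B)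
    (h : A * B = 5 * q ^ 4) (hq : q ≠ 0) :
    ∃ a b : ℤ, 0 < a ∧ 0 < b ∧ a ^ 2 * b ^ 2 = q ^ 2 ∧ A + B = 5 * a ^ 4 + b ^ 4 ∧
      IsCoprime b a := by
  have hp5 : Prime (5 : ℤ) := Int.prime_iff_natAbs_prime.mpr (by norm_num)
  have h5 : (5:ℤ) ∣ A * B := ⟨q ^ 4, h⟩
  rcases hp5.dvd_mul.mp h5 with hdA | hdB
  · obtain ⟨G, rfl⟩ := hdA
    have hGpos : 0 < G := by nlinarith
    have h' : G * B = q ^ 4 := by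
      have h2 : 5 * (G * B) = 5 * q ^ 4 := by linarith [h]
      exact mul_left_cancel₀ (by norm_num : (5:ℤ) ≠ 0) h2
    obtain ⟨a, b, hap, hbp, hab, hcab, hGa, hBb⟩ :=
      split_pow4 G B q hGpos hB hcop.of_mul_left_right h' hq
    exact ⟨a, b, hap, hbp, hab, by rw [hGa, hBb], hcab.symm⟩
  · obtain ⟨G, rfl⟩ := hdB
    have hGpos : 0 < G := by nlinarith
    have h' : A * G = q ^ 4 := by
      have h2 : 5 * (A * G) = 5 * q ^ 4 := by linarith [h]
      exact mul_left_cancel₀ (by norm_num : (5:ℤ) ≠ 0) h2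
    obtain ⟨a, b, hap, hbp, hab, hcab, hAa, hGb⟩ :=
      split_pow4 A G q hA hGpos hcop.of_mul_right_right h' hq
    exact ⟨b, a, hbp, hap, by linarith [hab], by rw [hAa, hGb]; ring, hcab⟩

lemma exists_prime_dvd_gcd (a b : ℤ) (h : Int.gcd a b ≠ 1) :
    ∃ r : ℕ, r.Prime ∧ (r:ℤ) ∣ a ∧ (r:ℤ) ∣ b := by
  obtain ⟨r, hrp, hrd⟩ := Nat.exists_prime_and_dvd h
  exact ⟨r, hrp, (Int.natCast_dvd_natCast.mpr hrd).trans (Int.gcd_dvd_left a b),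
    (Int.natCast_dvd_natCast.mpr hrd).trans (Int.gcd_dvd_right a b)⟩

lemma natAbs_le_of_sq_le {a b : ℤ} (h : a^2 ≤ b^2) : a.natAbs ≤ b.natAbs := by
  have h' : (a.natAbs : ℤ)^2 ≤ (b.natAbs : ℤ)^2 := by
    rwa [Int.natAbs_sq, Int.natAbs_sq]
  have h'' : a.natAbs^2 ≤ b.natAbs^2 := by exact_mod_cast h'
  exact (Nat.pow_le_pow_iff_left two_ne_zero).mp h''

lemma natAbs_lt_of_sq_lt {a b : ℤ} (h : a^2 < b^2) : a.natAbs < b.natAbs := by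
  have h' : (a.natAbs : ℤ)^2 < (b.natAbs : ℤ)^2 := by
    rwa [Int.natAbs_sq, Int.natAbs_sq]
  have h'' : a.natAbs^2 < b.natAbs^2 := by exact_mod_cast h'
  exact (Nat.pow_lt_pow_iff_left two_ne_zero).mp h''

lemma sq_eq_one_of_natAbs (a : ℤ) (h : a.natAbs = 1) : a ^ 2 = 1 := by
  rcases Int.natAbs_eq a with h1 | h1 <;> rw [h1, h] <;> norm_num

lemma prime_int (r : ℕ) (h : r.Prime) : Prime (r : ℤ) := Int.prime_iff_natAbs_prime.mpr (by simpa using h)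


lemma int_sq_ne_five (v : ℤ) : v ^ 2 ≠ 5 := by
  intro h
  have habs : |v| ^ 2 = 5 := by rw [sq_abs]; exact h
  have h0 : 0 ≤ |v| := abs_nonneg v
  rcases le_or_gt |v| 2 with hv | hv
  · nlinarith
  · have h3 : 3 ≤ |v| := hv
    nlinarith

lemma prime_dvd_contra (p q : ℤ) (r : ℕ) (h1 : (r:ℤ) ∣ p) (h2 : (r:ℤ) ∣ q)
    (hco : Int.gcd p q = 1) (hp : r.Prime) : False := by
  have h3 : (r:ℤ) ∣ (Int.gcd p q : ℤ) := Int.dvd_coe_gcd h1 h2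
  rw [hco] at h3
  have h4 : r ∣ 1 := by exact_mod_cast h3
  exact hp.one_lt.ne' (Nat.dvd_one.mp h4)

lemma sq_pos_one_le (p : ℤ) (hp : p ≠ 0) : 1 ≤ p ^ 2 := by
  have : 0 < p ^ 2 := by positivity
  omega

lemma two_dvd_of_even {a : ℤ} (h : Even a) : (2:ℤ) ∣ a := by
  obtain ⟨s, rfl⟩ := h; exact ⟨s, by ring⟩

lemma even_of_two_dvd {a : ℤ} (h : (2:ℤ) ∣ a) : Even a := by
  obtain ⟨k, rfl⟩ := h; exact ⟨k, by ring⟩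

lemma pos_left_of_mul (A B C : ℤ) (h : A * B = C) (hC : 0 < C) (hB : 0 < B) : 0 < A := by
  rcases lt_trichotomy A 0 with h1 | h1 | h1
  · nlinarith
  · subst h1; simp at h; omega
  · exact h1

lemma no_sol_l1 (u k : ℤ) (h : u ^ 2 = 1 + k ^ 2 - k ^ 4) (hk : 2 ≤ k) : False := by
  have h4 : 4 ≤ k ^ 2 := by nlinarith [sq_nonneg (k - 2)]
  nlinarith [sq_nonneg u, sq_nonneg (k ^ 2 - 2)]

lemma k_sq_lt (e k l : ℤ) (hE2 : e ^ 2 = k ^ 2 * l ^ 2) (hk : 0 < k) (hl : 2 ≤ l) :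
    k ^ 2 < e ^ 2 := by
  have h4 : 4 ≤ l ^ 2 := by nlinarith [sq_nonneg (l - 2)]
  have hk1 : 1 ≤ k ^ 2 := sq_pos_one_le k (by omega)
  nlinarith [mul_nonneg (by positivity : (0:ℤ) ≤ k ^ 2) (by linarith : (0:ℤ) ≤ l ^ 2 - 4)]

lemma Q1of (p q u : ℤ) (hq : q ≠ 0) (hco : Int.gcd p q = 1) (hu : 0 ≤ u)
    (h : u ^ 2 = p ^ 4 + p ^ 2 * q ^ 2 - q ^ 4)
    (HQ2 : ∀ a b w : ℤ, b.natAbs ≤ q.natAbs → Int.gcd a b = 1 →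
      w ^ 2 = a ^ 4 - 2 * a ^ 2 * b ^ 2 + 5 * b ^ 4 → a ^ 2 = 1 ∧ b ^ 2 ≤ 1) :
    p ^ 2 = 1 ∧ q ^ 2 = 1 := by
  have hq4 : 0 < q ^ 4 := by positivity
  have hp0 : p ≠ 0 := by
    rintro rfl
    nlinarith [sq_nonneg u]
  have hp2 : 1 ≤ p ^ 2 := sq_pos_one_le p hp0
  -- p is odd
  have hpodd : Odd p := by
    rw [← Int.not_even_iff_odd]
    intro hpe
    have hqodd : Odd q := by
      rw [← Int.not_even_iff_odd]
      intro hqe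
      exact prime_dvd_contra p q 2 (by exact_mod_cast two_dvd_of_even hpe)
        (by exact_mod_cast two_dvd_of_even hqe) hco Nat.prime_two
    obtain ⟨s, rfl⟩ := hpe
    obtain ⟨r, rfl⟩ := hqodd
    have h8 := congrArg (fun z : ℤ => (z : ZMod 8)) h
    push_cast at h8
    revert h8
    generalize (u : ZMod 8) = x
    generalize (s : ZMod 8) = y
    generalize (r : ZMod 8) = z
    revert x y z
    decide
  rcases Int.even_or_odd q with hqe | hqo
  · -- q even case
    obtain ⟨q₀, rfl⟩ := hqe
    have hq₀ : q₀ ≠ 0 := by rintro rfl; exact hq (by ring)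
    have huodd : Odd u := by
      rw [← Int.not_even_iff_odd]
      intro hue
      obtain ⟨t, rfl⟩ := hue
      obtain ⟨s, hs⟩ := hpodd
      rw [hs] at h
      have h4 := congrArg (fun z : ℤ => (z : ZMod 4)) h
      push_cast at h4
      revert h4
      generalize (t : ZMod 4) = x
      generalize (s : ZMod 4) = y
      generalize (q₀ : ZMod 4) = z
      revert x y z
      decide
    obtain ⟨A, hA⟩ : Even (p ^ 2 + 2 * q₀ ^ 2 + u) := by
      have e1 : Even (p ^ 2 + u) := (hpodd.pow).add_odd huodd
      have e2 : p ^ 2 + 2 * q₀ ^ 2 + u = (p ^ 2 + u) + 2 * q₀ ^ 2 := by ring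
      rw [e2]
      exact e1.add ⟨q₀ ^ 2, by ring⟩
    obtain ⟨B, hB⟩ : Even (p ^ 2 + 2 * q₀ ^ 2 - u) := by
      have e1 : Even (p ^ 2 - u) := (hpodd.pow).sub_odd huodd
      have e2 : p ^ 2 + 2 * q₀ ^ 2 - u = (p ^ 2 - u) + 2 * q₀ ^ 2 := by ring
      rw [e2]
      exact e1.add ⟨q₀ ^ 2, by ring⟩
    have eP : 2 * A = p ^ 2 + 2 * q₀ ^ 2 + u := by linarith [hA]
    have eM : 2 * B = p ^ 2 + 2 * q₀ ^ 2 - u := by linarith [hB]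
    have h4prod : 4 * (A * B) = 4 * (5 * q₀ ^ 4) := by
      linear_combination (p ^ 2 + 2 * q₀ ^ 2 - u) * eP + 2 * A * eM - h
    have hprod : A * B = 5 * q₀ ^ 4 :=
      mul_left_cancel₀ (by norm_num : (4:ℤ) ≠ 0) h4prod
    have hApos : 0 < A := by nlinarith [eP, hp2, hu, sq_nonneg q₀]
    have hq₀4 : 0 < 5 * q₀ ^ 4 := by positivity
    have hBpos : 0 < B := by nlinarith [hprod, hApos, hq₀4]
    have hcopAB : IsCoprime A B := by
      rw [Int.isCoprime_iff_gcd_eq_one]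
      by_contra hne
      obtain ⟨r, hrp, hrA, hrB⟩ := exists_prime_dvd_gcd A B hne
      have hri := prime_int r hrp
      have hru : (r:ℤ) ∣ u := by
        have hd : A - B = u := by linarith [eP, eM]
        exact hd ▸ dvd_sub hrA hrB
      have hr2 : r ≠ 2 := by
        rintro rfl
        rw [← Int.not_even_iff_odd] at huodd
        exact huodd (even_of_two_dvd (by exact_mod_cast hru))
      have hrsum : (r:ℤ) ∣ p ^ 2 + 2 * q₀ ^ 2 := by
        have hd : A + B = p ^ 2 + 2 * q₀ ^ 2 := by linarith [eP, eM]
        exact hd ▸ dvd_add hrA hrB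
      have hr5q : (r:ℤ) ∣ 5 * q₀ ^ 4 := hprod ▸ dvd_mul_of_dvd_left hrA B
      have hrq₀ : (r:ℤ) ∣ q₀ := by
        rcases hri.dvd_mul.mp hr5q with h5 | hq4'
        · have hr5 : r = 5 := by
            have h5' : r ∣ 5 := by exact_mod_cast h5
            exact (Nat.prime_dvd_prime_iff_eq hrp (by norm_num)).mp h5'
          subst hr5
          have h25 : (25:ℤ) ∣ 5 * q₀ ^ 4 := by
            have h26 := mul_dvd_mul hrA hrB
            rw [hprod] at h26
            exact (by norm_num : ((5:ℕ):ℤ) * ((5:ℕ):ℤ) = 25) ▸ h26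
          obtain ⟨k, hk⟩ := h25
          have h27 : q₀ ^ 4 = 5 * k := by linarith
          have h5q : ((5:ℕ):ℤ) ∣ q₀ ^ 4 := by exact_mod_cast (⟨k, h27⟩ : (5:ℤ) ∣ q₀ ^ 4)
          exact (prime_int 5 (by norm_num)).dvd_of_dvd_pow h5q
        · exact hri.dvd_of_dvd_pow hq4'
      have hrpsq : (r:ℤ) ∣ p ^ 2 := by
        have hd : p ^ 2 = (p ^ 2 + 2 * q₀ ^ 2) - q₀ * (2 * q₀) := by ring
        rw [hd]
        exact dvd_sub hrsum (hrq₀.mul_right _)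
      exact prime_dvd_contra p (q₀ + q₀) r (hri.dvd_of_dvd_pow hrpsq)
        (by have hd : q₀ + q₀ = q₀ * 2 := by ring
            rw [hd]; exact hrq₀.mul_right 2) hco hrp
    obtain ⟨a, b, hap, hbp, hab2, hsum, hcopba⟩ :=
      five_split A B q₀ hApos hBpos hcopAB hprod hq₀
    have hABsum : A + B = p ^ 2 + 2 * q₀ ^ 2 := by linarith [eP, eM]
    have key : p ^ 2 = b ^ 4 - 2 * b ^ 2 * a ^ 2 + 5 * a ^ 4 := by
      linear_combination hsum - hABsum + 2 * hab2
    have hb2 : 1 ≤ b ^ 2 := sq_pos_one_le b (by linarith)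
    have hbound : a.natAbs ≤ (q₀ + q₀).natAbs := by
      apply natAbs_le_of_sq_le
      nlinarith [hab2, hb2, sq_nonneg a, sq_nonneg q₀]
    obtain ⟨hb1, ha1⟩ := HQ2 b a p hbound (Int.isCoprime_iff_gcd_eq_one.mp hcopba) key
    have ha2 : a ^ 2 = 1 := le_antisymm ha1 (sq_pos_one_le a (by linarith))
    have hpfour : p ^ 2 = 4 := by
      linear_combination key + (b ^ 2 + 1 - 2 * a ^ 2) * hb1 + (5 * a ^ 2 + 3) * ha2
    exfalso
    have hoddp := Int.odd_iff.mp hpodd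
    have hfac : (p - 2) * (p + 2) = 0 := by linear_combination hpfour
    rcases mul_eq_zero.mp hfac with h1 | h1
    · have hp2' : p = 2 := by linarith
      rw [hp2'] at hoddp; norm_num at hoddp
    · have hp2' : p = -2 := by linarith
      rw [hp2'] at hoddp
      norm_num at hoddp
  · -- q odd case
    have hFprod : (2 * p ^ 2 + q ^ 2 + 2 * u) * (2 * p ^ 2 + q ^ 2 - 2 * u) = 5 * q ^ 4 := by
      linear_combination (-4) * h
    set FP := 2 * p ^ 2 + q ^ 2 + 2 * u with hFPdef
    set FM := 2 * p ^ 2 + q ^ 2 - 2 * u with hFMdef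
    have hFPpos : 0 < FP := by
      have h0 : 0 ≤ q ^ 2 := sq_nonneg q
      rw [hFPdef]; linarith
    have hFMpos : 0 < FM := by
      have h5 : 0 < 5 * q ^ 4 := by positivity
      nlinarith [hFprod, hFPpos]
    have hFPodd : Odd FP := by
      have hd : FP = q ^ 2 + 2 * (p ^ 2 + u) := by rw [hFPdef]; ring
      rw [hd]
      exact (hqo.pow).add_even ⟨p ^ 2 + u, by ring⟩
    have hcopF : IsCoprime FP FM := by
      rw [Int.isCoprime_iff_gcd_eq_one]
      by_contra hne
      obtain ⟨r, hrp, hrA, hrB⟩ := exists_prime_dvd_gcd FP FM hne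
      have hri := prime_int r hrp
      have hr2 : r ≠ 2 := by
        rintro rfl
        rw [← Int.not_even_iff_odd] at hFPodd
        exact hFPodd (even_of_two_dvd (by exact_mod_cast hrA))
      have hru : (r:ℤ) ∣ u := by
        have hd : (r:ℤ) ∣ 4 * u := by
          have hd2 : FP - FM = 4 * u := by rw [hFPdef, hFMdef]; ring
          exact hd2 ▸ dvd_sub hrA hrB
        rcases hri.dvd_mul.mp hd with h4 | hu'
        · exfalso
          have hd3 : (r:ℤ) ∣ 2 * 2 := by exact_mod_cast h4
          rcases hri.dvd_mul.mp hd3 with h2' | h2'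
          all_goals {
            have h2'' : r ∣ 2 := by exact_mod_cast h2'
            exact hr2 ((Nat.prime_dvd_prime_iff_eq hrp Nat.prime_two).mp h2'') }
        · exact hu'
      have hr5q : (r:ℤ) ∣ 5 * q ^ 4 := hFprod ▸ dvd_mul_of_dvd_left hrA FM
      have hrq : (r:ℤ) ∣ q := by
        rcases hri.dvd_mul.mp hr5q with h5 | hq4'
        · have hr5 : r = 5 := by
            have h5' : r ∣ 5 := by exact_mod_cast h5
            exact (Nat.prime_dvd_prime_iff_eq hrp (by norm_num)).mp h5'
          subst hr5
          have h25 : (25:ℤ) ∣ 5 * q ^ 4 := by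
            have h26 := mul_dvd_mul hrA hrB
            rw [hFprod] at h26
            exact (by norm_num : ((5:ℕ):ℤ) * ((5:ℕ):ℤ) = 25) ▸ h26
          obtain ⟨k, hk⟩ := h25
          have h27 : q ^ 4 = 5 * k := by linarith
          have h5q : ((5:ℕ):ℤ) ∣ q ^ 4 := by exact_mod_cast (⟨k, h27⟩ : (5:ℤ) ∣ q ^ 4)
          exact (prime_int 5 (by norm_num)).dvd_of_dvd_pow h5q
        · exact hri.dvd_of_dvd_pow hq4'
      have hrpsq : (r:ℤ) ∣ 2 * p ^ 2 := by
        have hd : 2 * p ^ 2 = FP - q * q - 2 * u := by rw [hFPdef]; ring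
        rw [hd]
        exact dvd_sub (dvd_sub hrA (hrq.mul_right q)) (hru.mul_left 2)
      have hrpp : (r:ℤ) ∣ p := by
        rcases hri.dvd_mul.mp hrpsq with h2' | hp'
        · exfalso
          have h2'' : r ∣ 2 := by exact_mod_cast h2'
          exact hr2 ((Nat.prime_dvd_prime_iff_eq hrp Nat.prime_two).mp h2'')
        · exact hri.dvd_of_dvd_pow hp'
      exact prime_dvd_contra p q r hrpp hrq hco hrp
    obtain ⟨a, b, hap, hbp, hab2, hsum, hcopba⟩ :=
      five_split FP FM q hFPpos hFMpos hcopF hFprod hq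
    have hABsum : FP + FM = 4 * p ^ 2 + 2 * q ^ 2 := by rw [hFPdef, hFMdef]; ring
    have key : (2 * p) ^ 2 = b ^ 4 - 2 * b ^ 2 * a ^ 2 + 5 * a ^ 4 := by
      linear_combination hsum - hABsum + 2 * hab2
    have hb2 : 1 ≤ b ^ 2 := sq_pos_one_le b (by linarith)
    have hbound : a.natAbs ≤ q.natAbs := by
      apply natAbs_le_of_sq_le
      nlinarith [hab2, hb2, sq_nonneg a]
    obtain ⟨hb1, ha1⟩ := HQ2 b a (2 * p) hbound (Int.isCoprime_iff_gcd_eq_one.mp hcopba) key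
    have ha2 : a ^ 2 = 1 := le_antisymm ha1 (sq_pos_one_le a (by linarith))
    constructor
    · have h4 : 4 * p ^ 2 = 4 * 1 := by
        linear_combination key + (b ^ 2 + 1 - 2 * a ^ 2) * hb1 + (5 * a ^ 2 + 3) * ha2
      exact mul_left_cancel₀ (by norm_num : (4:ℤ) ≠ 0) h4
    · linear_combination (-1) * hab2 + a ^ 2 * hb1 + ha2

set_option maxHeartbeats 2000000 in
lemma Q2core : ∀ n : ℕ, ∀ u e v : ℤ, e.natAbs = n → Int.gcd u e = 1 →
    v ^ 2 = u ^ 4 - 2 * u ^ 2 * e ^ 2 + 5 * e ^ 4 → u ^ 2 = 1 ∧ e ^ 2 ≤ 1 := by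
  intro n
  induction n using Nat.strong_induction_on with
  | _ n IH =>
  intro u e v hn hco heq
  by_cases he0 : e = 0
  · subst he0
    simp [Int.gcd] at hco
    exact ⟨sq_eq_one_of_natAbs u hco, by norm_num⟩
  have hu0 : u ≠ 0 := by
    rintro rfl
    have he1 : e.natAbs = 1 := by simpa [Int.gcd] using hco
    have he2 : e ^ 2 = 1 := sq_eq_one_of_natAbs e he1
    have he4 : e ^ 4 = 1 := by nlinarith [he2]
    have hv5 : v ^ 2 = 5 := by rw [heq, he4, he2]; ring
    exact int_sq_ne_five v hv5
  by_cases hue : u ^ 2 = e ^ 2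
  · have hfac : (u - e) * (u + e) = 0 := by linear_combination hue
    have he1 : e.natAbs = 1 := by
      rcases mul_eq_zero.mp hfac with h1 | h1
      · have : u = e := by linarith
        rw [this, Int.gcd_self] at hco
        exact hco
      · have : u = -e := by linarith
        rw [this, Int.neg_gcd, Int.gcd_self] at hco
        exact hco
    have he2 : e ^ 2 = 1 := sq_eq_one_of_natAbs e he1
    exact ⟨by rw [hue, he2], by rw [he2]⟩
  have hepos : 0 < e ^ 2 := by positivity
  have hQ1use : ∀ k l : ℤ, 0 < k → 0 < l → Int.gcd l k = 1 → e ^ 2 = k ^ 2 * l ^ 2 →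
      u ^ 2 = l ^ 4 + l ^ 2 * k ^ 2 - k ^ 4 → (l = 1 → False) → False := by
    intro k l hkpos hlpos hcolk hE2 hQ1eq hlne1
    have hlne1' : l ≠ 1 := fun h => hlne1 h
    have hl2 : 2 ≤ l := by omega
    have hkltn : k.natAbs < n := by
      rw [← hn]
      apply natAbs_lt_of_sq_lt
      exact k_sq_lt e k l hE2 hkpos hl2
    have habs : |u| ^ 2 = l ^ 4 + l ^ 2 * k ^ 2 - k ^ 4 := by rw [sq_abs]; exact hQ1eq
    obtain ⟨hl1, _⟩ := Q1of l k |u| (by omega) hcolk (abs_nonneg u) habs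
      (fun a b w hb hg hEq => IH b.natAbs (by omega) a b w rfl hg hEq)
    nlinarith [hl1, hl2]
  have hOP : Odd (u ^ 2 - e ^ 2) → u ^ 2 = 1 ∧ e ^ 2 ≤ 1 := by
    intro hodd
    have hpyth : PythagoreanTriple (u ^ 2 - e ^ 2) (2 * e ^ 2) v := by
      have hpy : (u ^ 2 - e ^ 2) * (u ^ 2 - e ^ 2) + (2 * e ^ 2) * (2 * e ^ 2) = v * v := by
        linear_combination (-1) * heq
      exact hpy
    have hgcd1 : Int.gcd (u ^ 2 - e ^ 2) (2 * e ^ 2) = 1 := by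
      by_contra hne
      obtain ⟨r, hrp, hr1, hr2⟩ := exists_prime_dvd_gcd _ _ hne
      have hri := prime_int r hrp
      have hr2' : r ≠ 2 := by
        rintro rfl
        exact (Int.not_even_iff_odd.mpr hodd) (even_of_two_dvd (by exact_mod_cast hr1))
      have hre : (r:ℤ) ∣ e := by
        have hd : (r:ℤ) ∣ e ^ 2 := by
          rcases hri.dvd_mul.mp hr2 with h2' | h2'
          · exfalso
            have h2'' : r ∣ 2 := by exact_mod_cast h2'
            exact hr2' ((Nat.prime_dvd_prime_iff_eq hrp Nat.prime_two).mp h2'')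
          · exact h2'
        exact hri.dvd_of_dvd_pow hd
      have hru : (r:ℤ) ∣ u := by
        have hd : (r:ℤ) ∣ u ^ 2 := by
          have hd2 : u ^ 2 = (u ^ 2 - e ^ 2) + e * e := by ring
          rw [hd2]; exact dvd_add hr1 (hre.mul_right e)
        exact hri.dvd_of_dvd_pow hd
      exact prime_dvd_contra u e r hru hre hco hrp
    obtain ⟨m, n', hmn, hzz, hcmn, hpar⟩ :=
      PythagoreanTriple.coprime_classification.mp ⟨hpyth, hgcd1⟩
    rcases hmn with ⟨hx, hy⟩ | ⟨hx, hy⟩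
    · -- u^2 - e^2 = m^2 - n'^2, 2e^2 = 2 m n'
      have hy' : e ^ 2 = m * n' := by linarith
      have hprodpos : 0 < m * n' := by rw [← hy']; exact hepos
      obtain ⟨M, N, hx2, hy2, hMpos, hcMN, hparMN⟩ :
          ∃ M N : ℤ, u ^ 2 - e ^ 2 = M ^ 2 - N ^ 2 ∧ e ^ 2 = M * N ∧ 0 < M ∧
            Int.gcd M N = 1 ∧ (M % 2 = 0 ∧ N % 2 = 1 ∨ M % 2 = 1 ∧ N % 2 = 0) := by
        rcases lt_or_ge 0 m with hpos | hneg
        · exact ⟨m, n', hx, hy', hpos, hcmn, hpar⟩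
        · have hm0 : m ≠ 0 := by
            rintro rfl
            rw [zero_mul] at hprodpos
            exact lt_irrefl 0 hprodpos
          refine ⟨-m, -n', by linear_combination hx, by linear_combination hy', by omega, ?_,
            by omega⟩
          rw [Int.neg_gcd, Int.gcd_neg]
          exact hcmn
      have hNpos : 0 < N :=
        pos_left_of_mul N M (e ^ 2) (by linear_combination (-1) * hy2) hepos hMpos
      have hcopMN : IsCoprime M N := Int.isCoprime_iff_gcd_eq_one.mpr hcMN
      obtain ⟨k0, hk0⟩ := Int.sq_of_isCoprime hcopMN (show M * N = e ^ 2 from hy2.symm)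
      obtain ⟨k, hkpos, hk⟩ := sq_pos_split' M k0 hMpos hk0
      obtain ⟨l0, hl0⟩ := Int.sq_of_isCoprime hcopMN.symm
        (show N * M = e ^ 2 by rw [mul_comm]; exact hy2.symm)
      obtain ⟨l, hlpos, hl⟩ := sq_pos_split' N l0 hNpos hl0
      have hcolk : Int.gcd k l = 1 := by
        by_contra hne
        obtain ⟨r, hrp, hr1, hr2⟩ := exists_prime_dvd_gcd _ _ hne
        refine prime_dvd_contra M N r ?_ ?_ hcMN hrp
        · rw [hk, sq]; exact hr1.mul_right k
        · rw [hl, sq]; exact hr2.mul_right l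
      have hE2 : e ^ 2 = k ^ 2 * l ^ 2 := by rw [hy2, hk, hl]
      have hk4 : k ^ 4 = M ^ 2 := by linear_combination (-M - k ^ 2) * hk
      have hl4 : l ^ 4 = N ^ 2 := by linear_combination (-N - l ^ 2) * hl
      have hQ1eq : u ^ 2 = k ^ 4 + k ^ 2 * l ^ 2 - l ^ 4 := by
        linear_combination hx2 + hE2 - hk4 + hl4
      by_cases hk1 : k = 1
      · have hM1 : M = 1 := by rw [hk, hk1]; norm_num
        have hNeven : Even N := by
          rcases hparMN with ⟨h1, h2⟩ | ⟨h1, h2⟩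
          · omega
          · exact Int.even_iff.mpr h2
        have hleven : Even l := by
          have hNe : Even (l ^ 2) := by rw [← hl]; exact hNeven
          exact (Int.even_pow.mp hNe).1
        have hl2 : 2 ≤ l := by
          obtain ⟨c, hc⟩ := hleven
          omega
        exfalso
        rw [hk1] at hQ1eq
        have hQ1' : u ^ 2 = 1 + l ^ 2 - l ^ 4 := by linear_combination hQ1eq
        exact no_sol_l1 u l hQ1' hl2
      · exfalso
        exact hQ1use l k hlpos hkpos hcolk (by linear_combination hE2)
          (by linear_combination hQ1eq) (fun h => hk1 h)
    · exfalso
      have heven : Even (u ^ 2 - e ^ 2) := ⟨m * n', by rw [hx]; ring⟩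
      exact (Int.not_even_iff_odd.mpr hodd) heven
  rcases Int.even_or_odd u with hup | hup <;> rcases Int.even_or_odd e with hep | hep
  · -- both even: impossible
    exfalso
    exact prime_dvd_contra u e 2 (by exact_mod_cast two_dvd_of_even hup)
      (by exact_mod_cast two_dvd_of_even hep) hco Nat.prime_two
  · -- u even, e odd : opposite parity
    have hodd : Odd (u ^ 2 - e ^ 2) := by
      have h1 : Even (u ^ 2) := by rw [sq]; exact hup.mul_right u
      exact h1.sub_odd (hep.pow)
    exact hOP hodd
  · -- u odd, e even : opposite parity
    have hodd : Odd (u ^ 2 - e ^ 2) := by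
      have h1 : Even (e ^ 2) := by rw [sq]; exact hep.mul_right e
      exact (hup.pow).sub_even h1
    exact hOP hodd
  · -- both odd
    have huo := hup
    have heo := hep
    obtain ⟨t1, ht1⟩ := odd_sq_mod8 u huo
    obtain ⟨t2, ht2⟩ := odd_sq_mod8 e heo
    have hT : u ^ 2 - e ^ 2 = 8 * (t1 - t2) := by linarith
    set T := t1 - t2 with hTdef
    have hveven : Even (v ^ 2) := by
      refine ⟨32 * T ^ 2 + 2 * e ^ 4, ?_⟩
      linear_combination heq + (u ^ 2 - e ^ 2 + 8 * T) * hT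
    have hveven' : Even v := (Int.even_pow.mp hveven).1
    obtain ⟨w, rfl⟩ := hveven'
    have hw2 : w ^ 2 = (4 * T) ^ 2 + (e ^ 2) ^ 2 := by
      have h4 : 4 * w ^ 2 = 4 * ((4 * T) ^ 2 + (e ^ 2) ^ 2) := by
        linear_combination heq + (u ^ 2 - e ^ 2 + 8 * T) * hT
      exact mul_left_cancel₀ (by norm_num : (4:ℤ) ≠ 0) h4
    have hgcd1 : Int.gcd (4 * T) (e ^ 2) = 1 := by
      by_contra hne
      obtain ⟨r, hrp, hr1, hr2⟩ := exists_prime_dvd_gcd _ _ hne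
      have hri := prime_int r hrp
      have hre : (r:ℤ) ∣ e := hri.dvd_of_dvd_pow hr2
      have hrusq : (r:ℤ) ∣ u ^ 2 := by
        have hd : u ^ 2 = 2 * (4 * T) + e ^ 2 := by linarith [hT]
        rw [hd]
        exact dvd_add (hr1.mul_left 2) hr2
      exact prime_dvd_contra u e r (hri.dvd_of_dvd_pow hrusq) hre hco hrp
    have hpyth : PythagoreanTriple (4 * T) (e ^ 2) w := by
      have : (4 * T) * (4 * T) + (e ^ 2) * (e ^ 2) = w * w := by linear_combination (-1) * hw2
      exact this
    obtain ⟨m, n', hmn, hzz, hcmn, hpar⟩ :=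
      PythagoreanTriple.coprime_classification.mp ⟨hpyth, hgcd1⟩
    rcases hmn with ⟨hx, hy⟩ | ⟨hx, hy⟩
    · -- e^2 = 2 m n' : impossible since e odd
      exfalso
      have : Even (e ^ 2) := ⟨m * n', by rw [hy]; ring⟩
      rw [Int.even_pow] at this
      exact (Int.not_even_iff_odd.mpr heo) this.1
    -- now hx : 4 * T = 2*m*n', hy : e^2 = m^2 - n'^2
    have hprodpos : 0 < (m - n') * (m + n') := by
      have : (m - n') * (m + n') = e ^ 2 := by linear_combination (-1) * hy
      rw [this]; exact hepos
    obtain ⟨M, N, hMN1, hMN2, hMsum, hcMN, hparMN⟩ :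
        ∃ M N : ℤ, 4 * T = 2 * M * N ∧ e ^ 2 = M ^ 2 - N ^ 2 ∧ 0 < M + N ∧
          Int.gcd M N = 1 ∧ (M + N) % 2 = 1 := by
      have hsumpar : (m + n') % 2 = 1 := by omega
      rcases lt_or_ge 0 (m + n') with hpos | hneg
      · exact ⟨m, n', hx, hy, hpos, hcmn, hsumpar⟩
      · have hne : m + n' ≠ 0 := by
          intro h0
          rw [h0, mul_zero] at hprodpos
          exact lt_irrefl 0 hprodpos
        refine ⟨-m, -n', by linear_combination hx, by linear_combination hy, by omega, ?_, by omega⟩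
        rw [Int.neg_gcd, Int.gcd_neg]
        exact hcmn
    have hMN0 : (M - N) * (M + N) = e ^ 2 := by linear_combination (-1) * hMN2
    have hMdiff : 0 < M - N := pos_left_of_mul _ _ _ hMN0 hepos hMsum
    have hdiffpar : (M - N) % 2 = 1 := by omega
    have hcopMN : IsCoprime (M - N) (M + N) := by
      rw [Int.isCoprime_iff_gcd_eq_one]
      by_contra hne
      obtain ⟨r, hrp, hr1, hr2⟩ := exists_prime_dvd_gcd _ _ hne
      have hri := prime_int r hrp
      have hr2' : r ≠ 2 := by
        rintro rfl
        obtain ⟨c, hc⟩ := hr1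
        omega
      have hrM : (r:ℤ) ∣ M := by
        have hd : (r:ℤ) ∣ 2 * M := by
          have : 2 * M = (M - N) + (M + N) := by ring
          rw [this]; exact dvd_add hr1 hr2
        rcases hri.dvd_mul.mp hd with h2' | h2'
        · exfalso
          have : r ∣ 2 := by exact_mod_cast h2'
          exact hr2' ((Nat.prime_dvd_prime_iff_eq hrp Nat.prime_two).mp this)
        · exact h2'
      have hrN : (r:ℤ) ∣ N := by
        have hd : (r:ℤ) ∣ 2 * N := by
          have : 2 * N = (M + N) - (M - N) := by ring
          rw [this]; exact dvd_sub hr2 hr1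
        rcases hri.dvd_mul.mp hd with h2' | h2'
        · exfalso
          have : r ∣ 2 := by exact_mod_cast h2'
          exact hr2' ((Nat.prime_dvd_prime_iff_eq hrp Nat.prime_two).mp this)
        · exact h2'
      exact prime_dvd_contra M N r hrM hrN hcMN hrp
    obtain ⟨k0, hk0⟩ := Int.sq_of_isCoprime hcopMN hMN0
    obtain ⟨k, hkpos, hk⟩ := sq_pos_split' (M - N) k0 hMdiff hk0
    obtain ⟨l0, hl0⟩ := Int.sq_of_isCoprime hcopMN.symm (by rw [mul_comm] at hMN0; exact hMN0)
    obtain ⟨l, hlpos, hl⟩ := sq_pos_split' (M + N) l0 hMsum hl0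
    have hcolk : Int.gcd l k = 1 := by
      by_contra hne
      obtain ⟨r, hrp, hr1, hr2⟩ := exists_prime_dvd_gcd _ _ hne
      refine prime_dvd_contra (M - N) (M + N) r ?_ ?_
        (Int.isCoprime_iff_gcd_eq_one.mp hcopMN) hrp
      · rw [hk, sq]; exact hr2.mul_right k
      · rw [hl, sq]; exact hr1.mul_right l
    have hE2 : e ^ 2 = k ^ 2 * l ^ 2 := by rw [← hk, ← hl]; linear_combination hMN2
    have hl4 : l ^ 4 = (M + N) ^ 2 := by linear_combination (-(M + N) - l ^ 2) * hl
    have hk4 : k ^ 4 = (M - N) ^ 2 := by linear_combination (-(M - N) - k ^ 2) * hk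
    have h4MN : 4 * (M * N) = l ^ 4 - k ^ 4 := by rw [hl4, hk4]; ring
    have hQ1eq : u ^ 2 = l ^ 4 + l ^ 2 * k ^ 2 - k ^ 4 := by
      have hlk2 : l ^ 2 * k ^ 2 = e ^ 2 := by rw [hE2]; ring
      linear_combination hT + 2 * hMN1 + h4MN + (-1) * hlk2
    by_cases hl1 : l = 1
    · -- l = 1 : then e^2 = k^2, need k = 1
      have hE2' : e ^ 2 = k ^ 2 := by rw [hE2, hl1]; ring
      rw [hl1] at hQ1eq
      have hQ1' : u ^ 2 = 1 + k ^ 2 - k ^ 4 := by linear_combination hQ1eq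
      by_cases hk1 : k = 1
      · constructor
        · rw [hQ1', hk1]; norm_num
        · rw [hE2', hk1]; norm_num
      · exfalso
        have hk2 : 2 ≤ k := by omega
        exact no_sol_l1 u k hQ1' hk2
    · exfalso
      exact hQ1use k l hkpos hlpos hcolk hE2 hQ1eq (fun h => hl1 h)

lemma Q2 (u e v : ℤ) (hco : Int.gcd u e = 1)
    (heq : v ^ 2 = u ^ 4 - 2 * u ^ 2 * e ^ 2 + 5 * e ^ 4) : u ^ 2 = 1 ∧ e ^ 2 ≤ 1 :=
  Q2core e.natAbs u e v rfl hco heq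

lemma L1 (m e M : ℤ) (he : 0 < e) (hco : Int.gcd m e = 1)
    (heq : M ^ 2 = m * (m ^ 2 - 2 * m * e ^ 2 + 5 * e ^ 4)) :
    e = 1 ∧ (m = 0 ∨ m = 1 ∨ m = 5) := by
  have he4 : 0 < e ^ 4 := by positivity
  have hSpos : 0 < m ^ 2 - 2 * m * e ^ 2 + 5 * e ^ 4 := by
    nlinarith [sq_nonneg (m - e ^ 2)]
  by_cases hm0 : m = 0
  · subst hm0
    have h1 : e.natAbs = 1 := by simpa [Int.gcd] using hco
    have : e = 1 := by omega
    exact ⟨this, Or.inl rfl⟩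
  have hmpos : 0 < m := by
    rcases lt_trichotomy m 0 with h1 | h1 | h1
    · exfalso
      nlinarith [sq_nonneg M, mul_neg_of_neg_of_pos h1 hSpos]
    · exact absurd h1 hm0
    · exact h1
  by_cases h5 : (5:ℤ) ∣ m
  · -- m = 5 m₁
    obtain ⟨m₁, rfl⟩ := h5
    have hm₁pos : 0 < m₁ := by linarith
    have h25 : M ^ 2 = 25 * (m₁ * (5 * m₁ ^ 2 - 2 * m₁ * e ^ 2 + e ^ 4)) := by
      linear_combination heq
    have h5M : (5:ℤ) ∣ M := by
      have hd : (5:ℤ) ∣ M ^ 2 := ⟨5 * (m₁ * (5 * m₁ ^ 2 - 2 * m₁ * e ^ 2 + e ^ 4)), by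
        rw [h25]; ring⟩
      exact (prime_int 5 (by norm_num)).dvd_of_dvd_pow (by exact_mod_cast hd)
    obtain ⟨M₁, rfl⟩ := h5M
    have hM1 : M₁ ^ 2 = m₁ * (5 * m₁ ^ 2 - 2 * m₁ * e ^ 2 + e ^ 4) := by
      have h26 : 25 * (M₁ ^ 2) = 25 * (m₁ * (5 * m₁ ^ 2 - 2 * m₁ * e ^ 2 + e ^ 4)) := by
        linear_combination h25
      exact mul_left_cancel₀ (by norm_num : (25:ℤ) ≠ 0) h26
    have hTpos : 0 < 5 * m₁ ^ 2 - 2 * m₁ * e ^ 2 + e ^ 4 := by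
      nlinarith [sq_nonneg (5 * m₁ - e ^ 2)]
    have hcopT : IsCoprime m₁ (5 * m₁ ^ 2 - 2 * m₁ * e ^ 2 + e ^ 4) := by
      rw [Int.isCoprime_iff_gcd_eq_one]
      by_contra hne
      obtain ⟨r, hrp, hr1, hr2⟩ := exists_prime_dvd_gcd _ _ hne
      have hri := prime_int r hrp
      have hre : (r:ℤ) ∣ e := by
        have hd : (r:ℤ) ∣ e ^ 4 := by
          have hd2 : e ^ 4 = (5 * m₁ ^ 2 - 2 * m₁ * e ^ 2 + e ^ 4) - m₁ * (5 * m₁ - 2 * e ^ 2) := by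
            ring
          rw [hd2]
          exact dvd_sub hr2 (hr1.mul_right _)
        exact hri.dvd_of_dvd_pow hd
      exact prime_dvd_contra (5 * m₁) e r (hr1.mul_left 5) hre hco hrp
    obtain ⟨u0, hu0⟩ := Int.sq_of_isCoprime hcopT (hM1.symm)
    obtain ⟨u, hupos, hu⟩ := sq_pos_split' m₁ u0 hm₁pos hu0
    obtain ⟨v0, hv0⟩ := Int.sq_of_isCoprime hcopT.symm
      (show (5 * m₁ ^ 2 - 2 * m₁ * e ^ 2 + e ^ 4) * m₁ = M₁ ^ 2 by rw [mul_comm]; exact hM1.symm)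
    obtain ⟨v, hvpos, hv⟩ := sq_pos_split' _ v0 hTpos hv0
    have hcoeu : Int.gcd e u = 1 := by
      by_contra hne
      obtain ⟨r, hrp, hr1, hr2⟩ := exists_prime_dvd_gcd _ _ hne
      refine prime_dvd_contra (5 * m₁) e r ?_ hr1 hco hrp
      have : (r:ℤ) ∣ m₁ := by rw [hu, sq]; exact hr2.mul_right u
      exact this.mul_left 5
    have hQ2eq : v ^ 2 = e ^ 4 - 2 * e ^ 2 * u ^ 2 + 5 * u ^ 4 := by
      linear_combination (-1) * hv + (5 * m₁ + 5 * u ^ 2 - 2 * e ^ 2) * hu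
    obtain ⟨he1, hu1⟩ := Q2 e u v hcoeu hQ2eq
    have he1' : e = 1 := by
      have h1 : e ≤ 1 := by nlinarith [sq_nonneg (e - 1)]
      omega
    have hu1' : u = 1 := by
      have h1 : u ≤ 1 := by nlinarith [sq_nonneg (u - 1)]
      omega
    refine ⟨he1', Or.inr (Or.inr ?_)⟩
    rw [hu, hu1']
    norm_num
  · -- 5 does not divide m
    have hcopS : IsCoprime m (m ^ 2 - 2 * m * e ^ 2 + 5 * e ^ 4) := by
      rw [Int.isCoprime_iff_gcd_eq_one]
      by_contra hne
      obtain ⟨r, hrp, hr1, hr2⟩ := exists_prime_dvd_gcd _ _ hne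
      have hri := prime_int r hrp
      have hr5e : (r:ℤ) ∣ 5 * e ^ 4 := by
        have hd2 : 5 * e ^ 4 = (m ^ 2 - 2 * m * e ^ 2 + 5 * e ^ 4) - m * (m - 2 * e ^ 2) := by
          ring
        rw [hd2]
        exact dvd_sub hr2 (hr1.mul_right _)
      rcases hri.dvd_mul.mp hr5e with h5' | he'
      · have hr5 : r = 5 := by
          have h5'' : r ∣ 5 := by exact_mod_cast h5'
          exact (Nat.prime_dvd_prime_iff_eq hrp (by norm_num)).mp h5''
        subst hr5
        exact h5 (by exact_mod_cast hr1)
      · exact prime_dvd_contra m e r hr1 (hri.dvd_of_dvd_pow he') hco hrp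
    obtain ⟨u0, hu0⟩ := Int.sq_of_isCoprime hcopS (heq.symm)
    obtain ⟨u, hupos, hu⟩ := sq_pos_split' m u0 hmpos hu0
    obtain ⟨v0, hv0⟩ := Int.sq_of_isCoprime hcopS.symm
      (show (m ^ 2 - 2 * m * e ^ 2 + 5 * e ^ 4) * m = M ^ 2 by rw [mul_comm]; exact heq.symm)
    obtain ⟨v, hvpos, hv⟩ := sq_pos_split' _ v0 hSpos hv0
    have hcoue : Int.gcd u e = 1 := by
      by_contra hne
      obtain ⟨r, hrp, hr1, hr2⟩ := exists_prime_dvd_gcd _ _ hne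
      refine prime_dvd_contra m e r ?_ hr2 hco hrp
      rw [hu, sq]; exact hr1.mul_right u
    have hQ2eq : v ^ 2 = u ^ 4 - 2 * u ^ 2 * e ^ 2 + 5 * e ^ 4 := by
      linear_combination (-1) * hv + (m + u ^ 2 - 2 * e ^ 2) * hu
    obtain ⟨hu1, he1⟩ := Q2 u e v hcoue hQ2eq
    have he1' : e = 1 := by
      have h1 : e ≤ 1 := by nlinarith [sq_nonneg (e - 1)]
      omega
    refine ⟨he1', Or.inr (Or.inl ?_)⟩
    rw [hu, hu1]

lemma rat_int_of_sq (q : ℚ) (R : ℤ) (h : q ^ 2 = (R : ℚ)) : ∃ c : ℤ, q = (c : ℚ) := by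
  have hden : (q ^ 2).den = 1 := by rw [h]; exact Rat.den_intCast R
  rw [Rat.den_pow] at hden
  have h1 : q.den = 1 := by nlinarith [q.den.one_le_iff_ne_zero]
  exact ⟨q.num, by rw [← Rat.num_div_den q, h1]; simp⟩

lemma EA (X Y : ℚ) (h : Y ^ 2 = X ^ 3 + X ^ 2 + 4 * X + 4) : X = -1 ∨ X = 0 ∨ X = 4 := by
  obtain ⟨m, n, hn0, hXmn, hco⟩ :
      ∃ m n : ℤ, 0 < n ∧ X = (m:ℚ)/(n:ℚ) ∧ Int.gcd m n = 1 :=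
    ⟨X.num, X.den, by exact_mod_cast X.pos, (Rat.num_div_den X).symm,
      by simpa [Int.gcd] using X.reduced⟩
  have hnQ : ((n:ℚ)) ≠ 0 := by
    simp only [ne_eq, Int.cast_eq_zero]
    omega
  have hsq : (Y * (n:ℚ) ^ 2) ^ 2 =
      ((n * ((m + n) * ((m + n) ^ 2 - 2 * (m + n) * n + 5 * n ^ 2)) : ℤ) : ℚ) := by
    have h2 : (Y * (n:ℚ) ^ 2) ^ 2 = Y ^ 2 * (n:ℚ) ^ 4 := by ring
    rw [h2, h, hXmn]
    push_cast
    field_simp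
    ring
  obtain ⟨c, hc⟩ := rat_int_of_sq _ _ hsq
  have hcZ : c ^ 2 = n * ((m + n) * ((m + n) ^ 2 - 2 * (m + n) * n + 5 * n ^ 2)) := by
    rw [hc] at hsq
    exact_mod_cast hsq
  have hcopnK : IsCoprime n ((m + n) * ((m + n) ^ 2 - 2 * (m + n) * n + 5 * n ^ 2)) := by
    rw [Int.isCoprime_iff_gcd_eq_one]
    by_contra hne
    obtain ⟨r, hrp, hr1, hr2⟩ := exists_prime_dvd_gcd _ _ hne
    have hri := prime_int r hrp
    have hrmn : (r:ℤ) ∣ m + n := by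
      rcases hri.dvd_mul.mp hr2 with h1 | h1
      · exact h1
      · have hd : (r:ℤ) ∣ (m + n) ^ 2 := by
          have hd2 : (m + n) ^ 2 =
              ((m + n) ^ 2 - 2 * (m + n) * n + 5 * n ^ 2) + n * (2 * (m + n) - 5 * n) := by ring
          rw [hd2]
          exact dvd_add h1 (hr1.mul_right _)
        exact hri.dvd_of_dvd_pow hd
    have hrm : (r:ℤ) ∣ m := by
      have hd : m = (m + n) - n := by ring
      rw [hd]; exact dvd_sub hrmn hr1
    exact prime_dvd_contra m n r hrm hr1 hco hrp
  obtain ⟨e0, he0⟩ := Int.sq_of_isCoprime hcopnK (hcZ.symm)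
  obtain ⟨e, hepos, hne⟩ := sq_pos_split' n e0 hn0 he0
  have hedvd : e ∣ c := by
    apply (Int.pow_dvd_pow_iff (two_ne_zero)).mp
    exact ⟨(m + n) * ((m + n) ^ 2 - 2 * (m + n) * n + 5 * n ^ 2), by rw [hcZ, hne]⟩
  obtain ⟨M, rfl⟩ := hedvd
  have hM : M ^ 2 = (m + n) * ((m + n) ^ 2 - 2 * (m + n) * e ^ 2 + 5 * e ^ 4) := by
    have h26 : e ^ 2 * M ^ 2 =
        e ^ 2 * ((m + n) * ((m + n) ^ 2 - 2 * (m + n) * e ^ 2 + 5 * e ^ 4)) := by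
      linear_combination hcZ + ((m + n) * ((m + n) ^ 2 - 2 * (m + n) * (n + e ^ 2)
        + 5 * (n ^ 2 + n * e ^ 2 + e ^ 4))) * hne
    exact mul_left_cancel₀ (by positivity) h26
  have hcopme : Int.gcd (m + n) e = 1 := by
    by_contra hne2
    obtain ⟨r, hrp, hr1, hr2⟩ := exists_prime_dvd_gcd _ _ hne2
    have hrn : (r:ℤ) ∣ n := by rw [hne, sq]; exact hr2.mul_right e
    have hrm : (r:ℤ) ∣ m := by
      have hd : m = (m + n) - n := by ring
      rw [hd]; exact dvd_sub hr1 hrn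
    exact prime_dvd_contra m n r hrm hrn hco hrp
  obtain ⟨he1, hm1⟩ := L1 (m + n) e M hepos hcopme hM
  have hn1 : n = 1 := by rw [hne, he1]; norm_num
  subst hn1
  rw [hXmn]
  rcases hm1 with h1 | h1 | h1
  · left
    have : m = -1 := by omega
    rw [this]; norm_num
  · right; left
    have : m = 0 := by omega
    rw [this]; norm_num
  · right; right
    have : m = 4 := by omega
    rw [this]; norm_num

/-- The genus-one curve `C₁₀ : y² = x(x-4)(x²+4)` over `ℚ` has exactly four affine rational
points. -/
theorem C10_rational_points :
    {p : ℚ × ℚ | p.2 ^ 2 = p.1 * (p.1 - 4) * (p.1 ^ 2 + 4)} =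
      {(4, 0), (0, 0), (-1, 5), (-1, -5)} := by
  ext ⟨x, y⟩
  simp only [Set.mem_setOf_eq, Set.mem_insert_iff, Set.mem_singleton_iff, Prod.mk.injEq]
  constructor
  · intro h
    by_cases hx : x = 0
    · subst hx
      have hy : y = 0 := by
        have h0 : y ^ 2 = 0 := by rw [h]; ring
        exact pow_eq_zero_iff two_ne_zero |>.mp h0
      right; left; exact ⟨rfl, hy⟩
    · have hE : (2 * y / x ^ 2) ^ 2 = (-4 / x) ^ 3 + (-4 / x) ^ 2 + 4 * (-4 / x) + 4 := by
        field_simp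
        linear_combination 4 * h
      rcases EA (-4 / x) (2 * y / x ^ 2) hE with h1 | h1 | h1
      · have hx4 : x = 4 := by
          field_simp at h1
          linarith
        subst hx4
        have hy : y = 0 := by
          have h0 : y ^ 2 = 0 := by rw [h]; ring
          exact pow_eq_zero_iff two_ne_zero |>.mp h0
        left; exact ⟨rfl, hy⟩
      · exfalso
        rw [div_eq_iff hx] at h1
        norm_num at h1
      · have hxm1 : x = -1 := by
          field_simp at h1
          linarith
        subst hxm1
        have h25 : (y - 5) * (y + 5) = 0 := by linear_combination h
        rcases mul_eq_zero.mp h25 with h2 | h2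
        · right; right; left; exact ⟨rfl, by linarith⟩
        · right; right; right; exact ⟨rfl, by linarith⟩
  · intro h
    rcases h with ⟨h1, h2⟩ | ⟨h1, h2⟩ | ⟨h1, h2⟩ | ⟨h1, h2⟩ <;> subst h1 <;> subst h2 <;> norm_num
end

section
/- The elliptic curve C₁₃ : y² = x(x² + 6x + 13) over ℚ has exactly one affine rational point, namely (0, 0). -/
lemma nat_pow_split {n : ℕ} {p q c : ℕ} (h : Nat.Coprime p q) (heq : p * q = c ^ n) :
    ∃ u v : ℕ, p = u ^ n ∧ q = v ^ n := by
  obtain ⟨u, hu⟩ := exists_eq_pow_of_mul_eq_pow (Nat.isUnit_iff.mpr h) heq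
  obtain ⟨v, hv⟩ := exists_eq_pow_of_mul_eq_pow (Nat.isUnit_iff.mpr h.symm)
    (by rw [mul_comm]; exact heq)
  exact ⟨u, v, hu, hv⟩

lemma zmod8_oddodd : ∀ x j k : ZMod 8,
    x^2 ≠ (2*j+1)^4 - 3*(2*k+1)^2*(2*j+1)^2 - (2*k+1)^4 := by decide

lemma zmod16_veven : ∀ x j k : ZMod 16,
    x^2 ≠ (2*j)^4 - 3*(2*k+1)^2*(2*j)^2 - (2*k+1)^4 := by decide

lemma zmod16_u2mod4 : ∀ x j k : ZMod 16,
    x^2 ≠ (2*j+1)^4 - 3*(2*(2*k+1))^2*(2*j+1)^2 - (2*(2*k+1))^4 := by decide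

lemma zmod8_13s4 : ∀ c σ : ZMod 8, 8*c+1 ≠ 13*(2*σ+1)^4 := by decide
lemma zmod8_neg13s4 : ∀ c σ : ZMod 8, 8*c+1 ≠ -(13*(2*σ+1)^4) := by decide
lemma zmod8_negs4 : ∀ c σ : ZMod 8, 8*c+1 ≠ -((2*σ+1)^4) := by decide

set_option maxHeartbeats 2000000 in
/-- Core descent lemma: `b² = a⁴ + 6a²e² + 13e⁴` has no solutions with `gcd(a,e)=1`, `e ≠ 0`. -/
lemma core_descent : ∀ N : ℕ, ∀ a e b : ℤ, e.natAbs = N → Int.gcd a e = 1 → e ≠ 0 →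
    b ^ 2 ≠ a ^ 4 + 6 * a ^ 2 * e ^ 2 + 13 * e ^ 4 := by
  intro N
  induction N using Nat.strong_induction_on with
  | _ N IH =>
  intro a e b hN hgcd he hb
  -- replace b by |b|
  set B : ℤ := |b| with hBdef
  have hBnn : 0 ≤ B := abs_nonneg b
  have hB : B ^ 2 = a ^ 4 + 6 * a ^ 2 * e ^ 2 + 13 * e ^ 4 := by
    rw [hBdef, sq_abs]; exact hb
  set s : ℤ := a ^ 2 + 3 * e ^ 2 with hsdef
  have hs : B ^ 2 = s ^ 2 + 4 * e ^ 4 := by rw [hB, hsdef]; ring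
  have he4 : 0 < e ^ 4 := by positivity
  have hspos : 0 < s := by positivity
  have hBgt : s < B := by nlinarith
  -- parity: B - s is even
  have hpar : Even (B - s) := by
    by_contra hodd
    rw [Int.not_even_iff_odd] at hodd
    have h1 : Odd (B + s) := by
      have : B + s = (B - s) + 2 * s := by ring
      rw [this]; exact hodd.add_even (even_two_mul s)
    have h2 : Odd ((B - s) * (B + s)) := hodd.mul h1
    have h3 : (B - s) * (B + s) = 2 * (2 * e ^ 4) := by rw [mul_comm]; nlinarith [hs]
    rw [h3] at h2
    exact (Int.not_odd_iff_even.mpr (even_two_mul (2 * e ^ 4))) h2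
  obtain ⟨p, hp⟩ := hpar
  have hp2 : B - s = 2 * p := by omega
  set q : ℤ := p + s with hqdef
  have hq2 : B + s = 2 * q := by rw [hqdef]; omega
  have hpq : p * q = e ^ 4 := by nlinarith [hs]
  have hppos : 0 < p := by nlinarith
  have hqpos : 0 < q := by nlinarith
  -- gcd(p,q) = 1
  have hgpq : Int.gcd p q = 1 := by
    by_contra hg
    obtain ⟨r, hrprime, hrdvd⟩ := Nat.exists_prime_and_dvd hg
    have hrp : (r : ℤ) ∣ p := (Int.natCast_dvd_natCast.mpr hrdvd).trans (Int.gcd_dvd_left _ _)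
    have hrq : (r : ℤ) ∣ q := (Int.natCast_dvd_natCast.mpr hrdvd).trans (Int.gcd_dvd_right _ _)
    have hrs : (r : ℤ) ∣ s := by
      have : s = q - p := by rw [hqdef]; ring
      rw [this]; exact dvd_sub hrq hrp
    have hre4 : (r : ℤ) ∣ e ^ 4 := by rw [← hpq]; exact hrp.mul_right q
    have hre : (r : ℤ) ∣ e := (Nat.prime_iff_prime_int.mp hrprime).dvd_of_dvd_pow hre4
    have hra2 : (r : ℤ) ∣ a ^ 2 := by
      have h5 : a ^ 2 = s - 3 * e ^ 2 := by rw [hsdef]; ring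
      rw [h5]; exact dvd_sub hrs (dvd_mul_of_dvd_right (hre.pow (by norm_num)) 3)
    have hra : (r : ℤ) ∣ a := (Nat.prime_iff_prime_int.mp hrprime).dvd_of_dvd_pow hra2
    have : (r : ℤ) ∣ (Int.gcd a e : ℤ) := Int.dvd_coe_gcd hra hre
    rw [hgcd] at this
    have : r ∣ 1 := Int.ofNat_dvd.mp (by exact_mod_cast this)
    exact hrprime.one_lt.ne' (Nat.dvd_one.mp this)
  -- to ℕ and split into fourth powers
  have hpqN : p.natAbs * q.natAbs = e.natAbs ^ 4 := by
    rw [← Int.natAbs_mul, hpq, Int.natAbs_pow]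
  obtain ⟨u, v, hu, hv⟩ := nat_pow_split hgpq hpqN
  have huv : u * v = e.natAbs := by
    have h6 : (u * v) ^ 4 = e.natAbs ^ 4 := by rw [mul_pow, ← hu, ← hv, hpqN]
    exact Nat.pow_left_injective (by norm_num) h6
  have hcuv : Nat.Coprime u v := by
    have := hgpq
    rw [Int.gcd, hu, hv] at this
    exact ((Nat.coprime_pow_left_iff (by norm_num : 0 < 4)) u v).mp
      (((Nat.coprime_pow_right_iff (by norm_num : 0 < 4)) (u ^ 4) v).mp this)
  have hune : u ≠ 0 := by
    rintro rfl
    rw [pow_succ, mul_zero, Int.natAbs_eq_zero] at hu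
    exact hppos.ne' hu
  have hvne : v ≠ 0 := by
    rintro rfl
    rw [pow_succ, mul_zero, Int.natAbs_eq_zero] at hv
    exact hqpos.ne' hv
  set U : ℤ := (u : ℤ) with hUdef
  set V : ℤ := (v : ℤ) with hVdef
  have hpU : p = U ^ 4 := by
    rw [← Int.natAbs_of_nonneg hppos.le, hu]; push_cast; rfl
  have hqV : q = V ^ 4 := by
    rw [← Int.natAbs_of_nonneg hqpos.le, hv]; push_cast; rfl
  have heUV : e ^ 2 = U ^ 2 * V ^ 2 := by
    have h7 : e ^ 2 = (e.natAbs : ℤ) ^ 2 := by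
      rw [← Int.abs_eq_natAbs, sq_abs]
    rw [h7, ← huv]; push_cast; ring
  -- the quartic for a
  have ha2 : a ^ 2 = V ^ 4 - 3 * U ^ 2 * V ^ 2 - U ^ 4 := by
    have h8 : q - p = s := by rw [hqdef]; ring
    rw [hpU, hqV] at h8
    rw [hsdef] at h8
    linear_combination (-1 : ℤ) * h8 - 3 * heUV
  -- parity analysis on (a, u, v)
  have zmod2_aeven : ∀ x j k : ZMod 2,
      (2*x)^2 ≠ (2*j+1)^4 - 3*(2*k)^2*(2*j+1)^2 - (2*k)^4 := by decide
  have hcuv2 : ¬ (Even U ∧ Even V) := by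
    rintro ⟨hU, hV⟩
    have h2u : 2 ∣ u := ((Int.even_coe_nat u).mp hU).two_dvd
    have h2v : 2 ∣ v := ((Int.even_coe_nat v).mp hV).two_dvd
    have : 2 ∣ Nat.gcd u v := Nat.dvd_gcd h2u h2v
    rw [hcuv] at this
    omega
  have hVodd : Odd V := by
    rw [← Int.not_even_iff_odd]
    intro hVe
    have hUodd : Odd U := by
      rcases Int.even_or_odd U with hUe | hUo
      · exact absurd ⟨hUe, hVe⟩ hcuv2
      · exact hUo
    obtain ⟨j, hj⟩ := hVe
    obtain ⟨k, hk⟩ := hUodd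
    have hj2 : V = 2 * j := by omega
    rw [hj2, hk] at ha2
    have h16 := congrArg (fun z : ℤ => (z : ZMod 16)) ha2
    push_cast at h16
    exact zmod16_veven _ _ _ h16
  have hUeven : Even U := by
    rw [← Int.not_odd_iff_even]
    intro hUo
    obtain ⟨j, hj⟩ := hVodd
    obtain ⟨k, hk⟩ := hUo
    rw [hj, hk] at ha2
    have h8 := congrArg (fun z : ℤ => (z : ZMod 8)) ha2
    push_cast at h8
    exact zmod8_oddodd _ _ _ h8
  have haodd : Odd a := by
    rw [← Int.not_even_iff_odd]
    intro hae
    obtain ⟨x0, hx0⟩ := hae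
    obtain ⟨j, hj⟩ := hVodd
    obtain ⟨k0, hk0⟩ := hUeven
    have hx0' : a = 2 * x0 := by omega
    have hk0' : U = 2 * k0 := by omega
    rw [hx0', hj, hk0'] at ha2
    have h2 := congrArg (fun z : ℤ => (z : ZMod 2)) ha2
    push_cast at h2
    exact zmod2_aeven _ _ _ h2
  -- 2-adic decomposition of u
  obtain ⟨k0, m, hmodd, humeq⟩ := Nat.exists_eq_two_pow_mul_odd hune
  have hk0ge : 2 ≤ k0 := by
    by_contra hk0lt
    interval_cases k0
    · -- u odd
      rw [pow_zero, one_mul] at humeq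
      have : Odd U := by rw [hUdef, humeq]; exact_mod_cast hmodd.natCast (R := ℤ)
      exact (Int.not_odd_iff_even.mpr hUeven) this
    · -- u = 2 * m with m odd
      obtain ⟨j, hj⟩ := hVodd
      obtain ⟨k1, hk1⟩ := hmodd
      have hUeq : U = 2 * (2 * (k1:ℤ) + 1) := by
        rw [hUdef, humeq]; push_cast [hk1]; ring
      rw [hj, hUeq] at ha2
      have h16 := congrArg (fun z : ℤ => (z : ZMod 16)) ha2
      push_cast at h16
      exact zmod16_u2mod4 _ _ _ h16
  obtain ⟨K, rfl⟩ : ∃ K, k0 = K + 2 := ⟨k0 - 2, by omega⟩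
  set D : ℤ := 2 ^ K with hDdef
  set M : ℤ := (m : ℤ) with hMdef
  have hUeq : U = 4 * (D * M) := by
    rw [hUdef, humeq]; push_cast [pow_succ]; ring
  obtain ⟨α, hα⟩ := haodd
  obtain ⟨β, hβ⟩ := hVodd
  have h21 := ha2
  rw [hα, hβ, hUeq] at h21
  set P : ℤ := 2*β^2 + 2*β - 12*(D*M)^2 - α with hPdef
  set Q : ℤ := 2*β^2 + 2*β - 12*(D*M)^2 + α + 1 with hQdef
  have h20 : 16 * (P * Q) = 16 * (16*13*D^4*M^4) := by
    rw [hPdef, hQdef]; linear_combination (-4 : ℤ) * h21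
  have hPQ : P * Q = 16*13*D^4*M^4 :=
    mul_left_cancel₀ (by norm_num : (16:ℤ) ≠ 0) h20
  have hPQsum : P + Q = V^2 - 24*(D*M)^2 := by
    rw [hPdef, hQdef, hβ]; ring
  have h2pow : (16:ℤ) * D^4 = 2^(4*K+4) := by
    rw [hDdef, ← pow_mul, show (16:ℤ) = 2^4 by norm_num, ← pow_add]
    congr 1
    omega
  have hMpos : 0 < M := by
    rw [hMdef]
    exact_mod_cast Nat.pos_of_ne_zero (by rintro rfl; simp at hmodd)
  -- the key continuation
  have key : ∀ X Z : ℤ, Odd X → X * Z = 13 * M^4 →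
      X + 16*D^4*Z = V^2 - 24*(D*M)^2 → False := by
    intro X Z hXodd hprod hsum
    have oddroot : ∀ w : ℕ, Odd (w^4) → Odd w := by
      intro w hw
      rcases Nat.even_or_odd w with hwe | hwo
      · exact absurd (Nat.even_pow.mpr ⟨hwe, by norm_num⟩) (Nat.not_even_iff_odd.mpr hw)
      · exact hwo
    -- gcd(X,Z) = 1
    have hMdvd : ∀ rr : ℕ, rr.Prime → (rr:ℤ) ∣ X → (rr:ℤ) ∣ Z → (rr:ℤ) ∣ M → False := by
      intro rr hrrp hrX hrZ hrM
      have hrV2 : (rr:ℤ) ∣ V^2 := by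
        have h30 : V^2 = X + 16*D^4*Z + 24*(D*M)^2 := by linear_combination (-1 : ℤ) * hsum
        rw [h30]
        exact dvd_add (dvd_add hrX (Dvd.dvd.mul_left hrZ _))
          (by exact Dvd.dvd.mul_left (dvd_pow (Dvd.dvd.mul_left hrM D) (by norm_num)) 24)
      have hrV : (rr:ℤ) ∣ V := (Nat.prime_iff_prime_int.mp hrrp).dvd_of_dvd_pow hrV2
      have hrv : rr ∣ v := by rwa [hVdef, Int.natCast_dvd_natCast] at hrV
      have hrm : rr ∣ m := by rwa [hMdef, Int.natCast_dvd_natCast] at hrM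
      have hru : rr ∣ u := by rw [humeq]; exact Dvd.dvd.mul_left hrm _
      have : rr ∣ Nat.gcd u v := Nat.dvd_gcd hru hrv
      rw [hcuv] at this
      exact hrrp.one_lt.ne' (Nat.dvd_one.mp this)
    have hgXZ : Int.gcd X Z = 1 := by
      by_contra hg
      obtain ⟨r, hrprime, hrdvd⟩ := Nat.exists_prime_and_dvd hg
      have hrX : (r:ℤ) ∣ X := (Int.natCast_dvd_natCast.mpr hrdvd).trans (Int.gcd_dvd_left _ _)
      have hrZ : (r:ℤ) ∣ Z := (Int.natCast_dvd_natCast.mpr hrdvd).trans (Int.gcd_dvd_right _ _)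
      have hr13 : (r:ℤ) ∣ 13 * M^4 := by rw [← hprod]; exact hrX.mul_right Z
      rcases (Nat.prime_iff_prime_int.mp hrprime).dvd_mul.mp hr13 with h13 | hM4
      · have hr13' : r = 13 := by
          have : r ∣ 13 := by exact_mod_cast h13
          exact (Nat.prime_dvd_prime_iff_eq hrprime (by norm_num)).mp this
        subst hr13'
        have h169 : (13:ℤ) * 13 ∣ X * Z := mul_dvd_mul hrX hrZ
        rw [hprod] at h169
        have h13M4 : (13:ℤ) ∣ M^4 := by
          rcases h169 with ⟨w, hw⟩
          exact ⟨w, by linarith⟩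
        have h13M : (13:ℤ) ∣ M :=
          (Nat.prime_iff_prime_int.mp (by norm_num : Nat.Prime 13)).dvd_of_dvd_pow h13M4
        exact hMdvd 13 (by norm_num) hrX hrZ h13M
      · have hrM : (r:ℤ) ∣ M := (Nat.prime_iff_prime_int.mp hrprime).dvd_of_dvd_pow hM4
        exact hMdvd r hrprime hrX hrZ hrM
    -- X ≡ 1 (mod 8)
    obtain ⟨γ, hγ⟩ := Int.even_mul_succ_self β
    have hX8 : X = 8*(γ - 3*(D*M)^2 - 2*D^4*Z) + 1 := by
      linear_combination hsum + 4*hγ + (V + 2*β + 1)*hβ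
    -- split |X| * |Z| = 13 * m^4 into fourth powers
    have hXne : X ≠ 0 := by rintro rfl; simp at hXodd
    have hxzN : X.natAbs * Z.natAbs = 13 * m^4 := by
      rw [← Int.natAbs_mul, hprod, hMdef]
      rw [Int.natAbs_mul, Int.natAbs_pow]
      simp
    have hcopN : Nat.Coprime X.natAbs Z.natAbs := hgXZ
    have h13dvd : 13 ∣ X.natAbs * Z.natAbs := by rw [hxzN]; exact ⟨m^4, rfl⟩
    have hxodd : Odd X.natAbs := Int.natAbs_odd.mpr hXodd
    rcases (Nat.Prime.dvd_mul (by norm_num : Nat.Prime 13)).mp h13dvd with h13x | h13z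
    · -- |X| = 13 s⁴ : impossible mod 8
      obtain ⟨x₂, hx₂⟩ := h13x
      have hxz2 : x₂ * Z.natAbs = m^4 := by
        have : 13 * (x₂ * Z.natAbs) = 13 * m^4 := by rw [← hxzN, hx₂]; ring
        omega
      have hcop2 : Nat.Coprime x₂ Z.natAbs :=
        Nat.Coprime.coprime_dvd_left ⟨13, by rw [hx₂]; ring⟩ hcopN
      obtain ⟨s, t, hs, ht⟩ := nat_pow_split hcop2 hxz2
      have hsodd : Odd s := by
        have h40 : Odd x₂ := by
          rcases Nat.even_or_odd x₂ with h41 | h41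
          · exfalso
            have : Even X.natAbs := by rw [hx₂]; exact h41.mul_left 13
            exact (Nat.not_odd_iff_even.mpr this) hxodd
          · exact h41
        exact oddroot s (hs ▸ h40)
      obtain ⟨σ, hσ⟩ := hsodd
      rcases Int.natAbs_eq X with hXe | hXe
      · rw [hx₂, hs, hσ] at hXe
        rw [hX8] at hXe
        have h8 := congrArg (fun z : ℤ => (z : ZMod 8)) hXe
        push_cast at h8
        exact zmod8_13s4 _ _ h8
      · rw [hx₂, hs, hσ] at hXe
        rw [hX8] at hXe
        have h8 := congrArg (fun z : ℤ => (z : ZMod 8)) hXe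
        push_cast at h8
        exact zmod8_neg13s4 _ _ h8
    · -- main case: X = s⁴, Z = 13 t⁴, descend
      obtain ⟨z₂, hz₂⟩ := h13z
      have hxz2 : X.natAbs * z₂ = m^4 := by
        have : 13 * (X.natAbs * z₂) = 13 * m^4 := by rw [← hxzN, hz₂]; ring
        omega
      have hcop2 : Nat.Coprime X.natAbs z₂ :=
        Nat.Coprime.coprime_dvd_right ⟨13, by rw [hz₂]; ring⟩ hcopN
      obtain ⟨s, t, hs, ht⟩ := nat_pow_split hcop2 hxz2
      have hsodd : Odd s := by
        have h40 : Odd X.natAbs := hxodd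
        exact oddroot s (hs ▸ h40)
      obtain ⟨σ, hσ⟩ := hsodd
      have hXeq : X = ((s:ℤ))^4 := by
        rcases Int.natAbs_eq X with hXe | hXe
        · rw [hXe, hs]; push_cast; ring
        · exfalso
          rw [hs, hσ] at hXe
          rw [hX8] at hXe
          have h8 := congrArg (fun z : ℤ => (z : ZMod 8)) hXe
          push_cast at h8
          exact zmod8_negs4 _ _ h8
      have hXpos : 0 < X := by
        rw [hXeq]
        have hs1 : (0:ℤ) < (s:ℤ) := by exact_mod_cast (by omega : 0 < s)
        exact pow_pos hs1 4
      have hrhspos : (0:ℤ) < 13 * M^4 :=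
        mul_pos (by norm_num) (pow_pos hMpos 4)
      have hZpos : 0 < Z := by
        rcases lt_trichotomy Z 0 with h|h|h
        · exfalso
          have h60 : X * Z < 0 := mul_neg_of_pos_of_neg hXpos h
          rw [hprod] at h60
          linarith
        · exfalso
          rw [h, mul_zero] at hprod
          linarith
        · exact h
      have hZeq : Z = 13 * ((t:ℤ))^4 := by
        have : Z.natAbs = 13 * t^4 := by rw [hz₂, ht]
        rw [← Int.natAbs_of_nonneg hZpos.le, this]; push_cast; ring
      have hmst : m = s * t := by
        have h50 : (s*t)^4 = m^4 := by rw [mul_pow, ← hs, ← ht, hxz2]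
        exact (Nat.pow_left_injective (by norm_num) h50).symm
      have htne : t ≠ 0 := by
        rintro rfl
        rw [mul_zero] at hmst
        simp [hmst] at hmodd
      -- set up the smaller solution
      set eN : ℕ := 2^(K+1) * t with heNdef
      have heNne : eN ≠ 0 := by
        rw [heNdef]
        positivity
      have hEcast : ((eN : ℕ) : ℤ) = 2*D*(t:ℤ) := by
        rw [heNdef, hDdef]; push_cast [pow_succ]; ring
      have hMeq : M = (s:ℤ) * (t:ℤ) := by rw [hMdef, hmst]; push_cast; ring
      have hfinal : V^2 = ((s:ℤ))^4 + 6*((s:ℤ))^2*((eN:ℕ):ℤ)^2 + 13*((eN:ℕ):ℤ)^4 := by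
        rw [hEcast]
        rw [hXeq, hZeq, hMeq] at hsum
        linear_combination (-1 : ℤ) * hsum
      have hgcdSE : Int.gcd ((s:ℤ)) ((eN:ℕ):ℤ) = 1 := by
        have hcopst : Nat.Coprime s t := by
          have := hcop2
          rw [hs, ht] at this
          exact ((Nat.coprime_pow_left_iff (by norm_num : 0 < 4)) s t).mp
            (((Nat.coprime_pow_right_iff (by norm_num : 0 < 4)) (s^4) t).mp this)
        have hcops2 : Nat.Coprime s (2^(K+1)) := by
          apply Nat.Coprime.pow_right
          exact Nat.coprime_two_right.mpr ⟨σ, hσ⟩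
        have : Nat.Coprime s eN := by
          rw [heNdef]
          exact Nat.Coprime.mul_right hcops2 hcopst
        simpa [Int.gcd_natCast_natCast] using this
      have hlt : eN < N := by
        rw [← hN, ← huv, humeq, hmst, heNdef]
        have hv1 : 1 ≤ v := Nat.pos_of_ne_zero hvne
        have hs1 : 1 ≤ s := by rw [hσ]; omega
        have ht1 : 1 ≤ t := Nat.pos_of_ne_zero htne
        calc 2^(K+1) * t < 2^(K+2) * t := by
              have : (2:ℕ)^(K+1) < 2^(K+2) := Nat.pow_lt_pow_right one_lt_two (by omega)
              exact mul_lt_mul_of_pos_right this ht1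
          _ ≤ 2^(K+2) * (s*t) := by
              apply Nat.mul_le_mul_left
              exact Nat.le_mul_of_pos_left t hs1
          _ ≤ 2^(K+2) * (s*t) * v := Nat.le_mul_of_pos_right _ hv1
      exact IH eN hlt (s:ℤ) ((eN:ℕ):ℤ) V (Int.natAbs_natCast eN) hgcdSE
        (by exact_mod_cast heNne) hfinal
  -- now apply `key` in the two parity cases
  have hQPodd : Odd (P + Q) := by
    rw [hPQsum]
    have hV2odd : Odd (V^2) := ⟨2*β^2 + 2*β, by rw [hβ]; ring⟩
    exact hV2odd.sub_even ⟨12*(D*M)^2, by ring⟩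
  rcases Int.even_or_odd P with hPe | hPo
  · -- P even, Q odd
    have hQo : Odd Q := by
      have : Q = (P + Q) - P := by ring
      rw [this]
      exact hQPodd.sub_even hPe
    have hcop2P : IsCoprime ((2:ℤ)^(4*K+4)) Q :=
      (Int.prime_two.coprime_iff_not_dvd.mpr (by
        intro hdvd
        exact (Int.not_odd_iff_even.mpr (even_iff_two_dvd.mpr hdvd)) hQo)).pow_left
    have hdvdP : (2:ℤ)^(4*K+4) ∣ P := by
      apply hcop2P.dvd_of_dvd_mul_right
      rw [hPQ, ← h2pow]
      exact ⟨13*M^4, by ring⟩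
    obtain ⟨Z, hZ⟩ := hdvdP
    have hQZ : Q * Z = 13 * M^4 := by
      apply mul_left_cancel₀ (a := (2:ℤ)^(4*K+4)) (by positivity)
      rw [show (2:ℤ)^(4*K+4) * (Q*Z) = (2^(4*K+4)*Z) * Q by ring, ← hZ]
      rw [hPQ, ← h2pow]
      ring
    exact key Q Z hQo hQZ (by rw [← hPQsum, h2pow, hZ]; ring)
  · -- P odd
    have hcop2P : IsCoprime ((2:ℤ)^(4*K+4)) P :=
      (Int.prime_two.coprime_iff_not_dvd.mpr (by
        intro hdvd
        exact (Int.not_odd_iff_even.mpr (even_iff_two_dvd.mpr hdvd)) hPo)).pow_left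
    have hdvdQ : (2:ℤ)^(4*K+4) ∣ Q := by
      apply hcop2P.dvd_of_dvd_mul_left
      rw [hPQ, ← h2pow]
      exact ⟨13*M^4, by ring⟩
    obtain ⟨Z, hZ⟩ := hdvdQ
    have hPZ : P * Z = 13 * M^4 := by
      apply mul_left_cancel₀ (a := (2:ℤ)^(4*K+4)) (by positivity)
      rw [show (2:ℤ)^(4*K+4) * (P*Z) = P * (2^(4*K+4)*Z) by ring, ← hZ, hPQ, ← h2pow]
      ring
    exact key P Z hPo hPZ (by rw [← hPQsum, h2pow, hZ])

set_option maxHeartbeats 1000000 in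
/-- No integral points: `n² = m(m² + 6me² + 13e⁴)` with `gcd(m,e)=1`, `m ≠ 0`, `e ≠ 0`. -/
lemma int_case (m n : ℤ) (e : ℕ) (he : e ≠ 0) (hgcd : Int.gcd m (e:ℤ) = 1) (hm : m ≠ 0) :
    n ^ 2 ≠ m ^ 3 + 6 * m ^ 2 * (e:ℤ) ^ 2 + 13 * m * (e:ℤ) ^ 4 := by
  intro heq
  set E : ℤ := (e : ℤ) with hEdef
  have hEpos : 0 < E := by rw [hEdef]; exact_mod_cast Nat.pos_of_ne_zero he
  set Mq : ℤ := m^2 + 6*m*E^2 + 13*E^4 with hMqdef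
  have hMqpos : 0 < Mq := by nlinarith [sq_nonneg (m + 3*E^2), pow_pos hEpos 4]
  have hprod : m * Mq = n^2 := by rw [hMqdef]; linear_combination (-1:ℤ) * heq
  have hmpos : 0 < m := by
    rcases lt_trichotomy m 0 with h|h|h
    · exfalso
      have h1 : m * Mq < 0 := mul_neg_of_neg_of_pos h hMqpos
      nlinarith [sq_nonneg n]
    · exact absurd h hm
    · exact h
  have hcopme : Nat.Coprime m.natAbs e := hgcd
  -- d := gcd(m, Mq) divides 13
  set d : ℕ := Int.gcd m Mq with hddef
  have hd13 : d ∣ 13 := by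
    have h1 : (d:ℤ) ∣ m := (Int.gcd_dvd_left _ _)
    have h2 : (d:ℤ) ∣ Mq := (Int.gcd_dvd_right _ _)
    have h3 : (d:ℤ) ∣ 13*E^4 := by
      have heq3 : (13:ℤ)*E^4 = Mq - m*m - 6*(m*E^2) := by rw [hMqdef]; ring
      rw [heq3]
      exact dvd_sub (dvd_sub h2 (h1.mul_right m)) (Dvd.dvd.mul_left (h1.mul_right (E^2)) 6)
    have h4 : d ∣ 13 * e^4 := by
      have := Int.natAbs_dvd_natAbs.mpr h3
      simpa [hEdef, Int.natAbs_mul, Int.natAbs_pow] using this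
    have h5 : Nat.Coprime d (e^4) := by
      apply Nat.Coprime.pow_right
      have hdm : d ∣ m.natAbs := by
        have := Int.natAbs_dvd_natAbs.mpr h1
        simpa using this
      exact Nat.Coprime.coprime_dvd_left hdm hcopme
    exact (Nat.Coprime.dvd_of_dvd_mul_right h5) h4
  have hd : d = 1 ∨ d = 13 := (Nat.Prime.eq_one_or_self_of_dvd (by norm_num) d hd13)
  rcases hd with hd1 | hd13'
  · -- d = 1 : m = a², Mq = b²
    have hsplitN : m.natAbs * Mq.natAbs = n.natAbs ^ 2 := by
      rw [← Int.natAbs_mul, hprod, Int.natAbs_pow]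
    obtain ⟨aa, bb, ha, hb⟩ := nat_pow_split (hd1 : Nat.Coprime m.natAbs Mq.natAbs) hsplitN
    have hmA : m = ((aa:ℤ))^2 := by
      rw [← Int.natAbs_of_nonneg hmpos.le, ha]; push_cast; ring
    have hMB : Mq = ((bb:ℤ))^2 := by
      rw [← Int.natAbs_of_nonneg hMqpos.le, hb]; push_cast; ring
    have hquartic : ((bb:ℤ))^2 = ((aa:ℤ))^4 + 6*((aa:ℤ))^2*E^2 + 13*E^4 := by
      rw [← hMB, hMqdef, hmA]; ring
    have hgcdae : Int.gcd ((aa:ℤ)) E = 1 := by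
      have h6 : Nat.Coprime (aa^2) e := by rw [← ha]; exact hcopme
      have h7 : Nat.Coprime aa e :=
        ((Nat.coprime_pow_left_iff (by norm_num : 0 < 2)) aa e).mp h6
      simpa [hEdef, Int.gcd_natCast_natCast] using h7
    exact core_descent E.natAbs (aa:ℤ) E (bb:ℤ) rfl hgcdae (by positivity) hquartic
  · -- d = 13 : m = 13 m₁
    have h13m : (13:ℤ) ∣ m := by
      have : (d:ℤ) ∣ m := (Int.gcd_dvd_left _ _)
      rw [hd13'] at this; exact_mod_cast this
    obtain ⟨m₁, hm₁⟩ := h13m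
    set M₁ : ℤ := 13*m₁^2 + 6*m₁*E^2 + E^4 with hM₁def
    have hMq13 : Mq = 13 * M₁ := by rw [hMqdef, hM₁def, hm₁]; ring
    have h13n : (13:ℤ) ∣ n := by
      have h8 : (13:ℤ) ∣ n^2 := by
        rw [← hprod, hm₁]; exact ⟨m₁ * Mq, by ring⟩
      exact (Nat.prime_iff_prime_int.mp (by norm_num : Nat.Prime 13)).dvd_of_dvd_pow h8
    obtain ⟨n₁, hn₁⟩ := h13n
    have hprod₁ : m₁ * M₁ = n₁^2 := by
      have h10 := hprod
      rw [hm₁, hMq13, hn₁] at h10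
      have h9 : (169:ℤ) * (m₁ * M₁) = 169 * n₁^2 := by linear_combination h10
      exact mul_left_cancel₀ (by norm_num : (169:ℤ) ≠ 0) h9
    have hm₁pos : 0 < m₁ := by
      have := hmpos; rw [hm₁] at this; linarith
    have hM₁pos : 0 < M₁ := by
      have := hMqpos; rw [hMq13] at this; linarith
    -- gcd(m₁, M₁) = 1
    have hgcd₁ : Int.gcd m₁ M₁ = 1 := by
      by_contra hg
      obtain ⟨r, hrprime, hrdvd⟩ := Nat.exists_prime_and_dvd hg
      have hr1 : (r:ℤ) ∣ m₁ := (Int.natCast_dvd_natCast.mpr hrdvd).trans (Int.gcd_dvd_left _ _)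
      have hr2 : (r:ℤ) ∣ M₁ := (Int.natCast_dvd_natCast.mpr hrdvd).trans (Int.gcd_dvd_right _ _)
      have hrE4 : (r:ℤ) ∣ E^4 := by
        have heq4 : E^4 = M₁ - 13*(m₁*m₁) - 6*(m₁*E^2) := by rw [hM₁def]; ring
        rw [heq4]
        exact dvd_sub (dvd_sub hr2 (Dvd.dvd.mul_left (hr1.mul_right m₁) 13))
          (Dvd.dvd.mul_left (hr1.mul_right (E^2)) 6)
      have hrE : (r:ℤ) ∣ E := (Nat.prime_iff_prime_int.mp hrprime).dvd_of_dvd_pow hrE4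
      have hrm : (r:ℤ) ∣ m := by rw [hm₁]; exact Dvd.dvd.mul_left hr1 13
      have : (r:ℤ) ∣ (Int.gcd m E : ℤ) := Int.dvd_coe_gcd hrm hrE
      rw [hgcd] at this
      have : r ∣ 1 := by exact_mod_cast this
      exact hrprime.one_lt.ne' (Nat.dvd_one.mp this)
    have hsplitN : m₁.natAbs * M₁.natAbs = n₁.natAbs ^ 2 := by
      rw [← Int.natAbs_mul, hprod₁, Int.natAbs_pow]
    obtain ⟨aa, bb, ha, hb⟩ := nat_pow_split (hgcd₁ : Nat.Coprime m₁.natAbs M₁.natAbs) hsplitN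
    have hmA : m₁ = ((aa:ℤ))^2 := by
      rw [← Int.natAbs_of_nonneg hm₁pos.le, ha]; push_cast; ring
    have hMB : M₁ = ((bb:ℤ))^2 := by
      rw [← Int.natAbs_of_nonneg hM₁pos.le, hb]; push_cast; ring
    have hquartic : ((bb:ℤ))^2 = E^4 + 6*E^2*((aa:ℤ))^2 + 13*((aa:ℤ))^4 := by
      rw [← hMB, hM₁def, hmA]; ring
    have hgcdae : Int.gcd E ((aa:ℤ)) = 1 := by
      have h6 : Nat.Coprime (aa^2) e := by
        have : Nat.Coprime m₁.natAbs e := by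
          apply Nat.Coprime.coprime_dvd_left _ hcopme
          rw [hm₁]
          exact (Int.natAbs_dvd_natAbs.mpr ⟨13, by ring⟩)
        rw [← ha]; exact this
      have h7 : Nat.Coprime aa e :=
        ((Nat.coprime_pow_left_iff (by norm_num : 0 < 2)) aa e).mp h6
      have := Nat.Coprime.symm h7
      simpa [hEdef, Int.gcd_natCast_natCast] using this
    have haane : ((aa:ℤ)) ≠ 0 := by
      intro h0
      rw [h0] at hmA
      simp at hmA
      exact hm₁pos.ne' hmA
    exact core_descent (aa:ℤ).natAbs E ((aa:ℤ)) (bb:ℤ) rfl hgcdae haane hquartic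

/-- The elliptic curve `C₁₃ : y² = x(x² + 6x + 13)` over `ℚ` has exactly one affine rational
point, namely `(0, 0)`. -/
theorem C13_rational_points :
    {p : ℚ × ℚ | p.2 ^ 2 = p.1 * (p.1 ^ 2 + 6 * p.1 + 13)} = {(0, 0)} := by
  ext ⟨x, y⟩
  simp only [Set.mem_setOf_eq, Set.mem_singleton_iff, Prod.mk.injEq]
  constructor
  · intro h
    by_cases hx : x = 0
    · subst hx
      refine ⟨rfl, ?_⟩
      have : y^2 = 0 := by rw [h]; ring
      exact pow_eq_zero_iff (by norm_num) |>.mp this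
    · exfalso
      set m : ℤ := x.num with hmdef
      set d1 : ℕ := x.den with hd1def
      have hd1pos : 0 < d1 := x.pos
      have hd1Q : ((d1:ℚ)) ≠ 0 := by positivity
      have hxeq : x = (m:ℚ)/(d1:ℚ) := by rw [hmdef, hd1def]; exact (Rat.num_div_den x).symm
      set N : ℤ := m^3 + 6*m^2*(d1:ℤ) + 13*m*(d1:ℤ)^2 with hNdef
      have hy2 : y^2 = ((N:ℤ):ℚ) / (((d1:ℤ)^3 : ℤ):ℚ) := by
        rw [h, hxeq, hNdef]
        push_cast
        field_simp
      have hcop : Nat.Coprime N.natAbs (((d1:ℤ)^3).natAbs) := by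
        have hred : Nat.Coprime m.natAbs d1 := x.reduced
        have hcopNd : Nat.Coprime N.natAbs d1 := by
          by_contra hg
          obtain ⟨r, hrprime, hrdvd⟩ := Nat.exists_prime_and_dvd hg
          have hrN : (r:ℤ) ∣ N := by
            have h70 : (r:ℤ) ∣ (N.natAbs:ℤ) :=
              Int.natCast_dvd_natCast.mpr (hrdvd.trans (Nat.gcd_dvd_left _ _))
            exact h70.trans (Int.natAbs_dvd.mpr dvd_rfl)
          have hrd : (r:ℤ) ∣ (d1:ℤ) :=
            Int.natCast_dvd_natCast.mpr (hrdvd.trans (Nat.gcd_dvd_right _ _))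
          have hrm3 : (r:ℤ) ∣ m^3 := by
            have heq5 : m^3 = N - (d1:ℤ)*(6*m^2 + 13*m*(d1:ℤ)) := by rw [hNdef]; ring
            rw [heq5]
            exact dvd_sub hrN (hrd.mul_right _)
          have hrm : (r:ℤ) ∣ m := (Nat.prime_iff_prime_int.mp hrprime).dvd_of_dvd_pow hrm3
          have hrmN : r ∣ m.natAbs := by
            rw [← Int.natAbs_natCast r]
            exact Int.natAbs_dvd_natAbs.mpr hrm
          have : r ∣ Nat.gcd m.natAbs d1 := Nat.dvd_gcd hrmN (hrdvd.trans (Nat.gcd_dvd_right _ _))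
          rw [hred] at this
          exact hrprime.one_lt.ne' (Nat.dvd_one.mp this)
        simpa [Int.natAbs_pow] using hcopNd.pow_right 3
      have hd13pos : (0:ℤ) < (d1:ℤ)^3 := by positivity
      have hnum : (y^2).num = N := by rw [hy2]; exact Rat.num_div_eq_of_coprime hd13pos hcop
      have hden : (((y^2).den):ℤ) = (d1:ℤ)^3 := by
        rw [hy2]; exact Rat.den_div_eq_of_coprime hd13pos hcop
      have hnum' : y.num^2 = N := by rw [← hnum, Rat.num_pow]
      have hden' : y.den^2 = d1^3 := by
        have : ((y.den^2 : ℕ):ℤ) = ((d1^3 : ℕ):ℤ) := by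
          push_cast
          rw [← hden, Rat.den_pow]
          push_cast
          ring
        exact_mod_cast this
      -- extract e with e² = d1
      have hcd : y.den ∣ d1^2 := by
        have h30 : (y.den)^2 ∣ (d1^2)^2 := by
          rw [hden', show (d1^2)^2 = d1^3 * d1 by ring]
          exact dvd_mul_right _ _
        exact (Nat.pow_dvd_pow_iff (by norm_num : 2 ≠ 0)).mp h30
      obtain ⟨e, hE0⟩ := hcd
      have he2 : e^2 = d1 := by
        have h31 : (y.den * e)^2 = d1^3 * e^2 := by rw [mul_pow, hden']
        rw [← hE0] at h31
        have h32 : d1^3 * e^2 = d1^3 * d1 := by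
          rw [← h31]; ring
        have := Nat.eq_of_mul_eq_mul_left (pow_pos hd1pos 3) h32
        exact this
      have he3 : e^3 = y.den := by
        have h33 : (e^3)^2 = (y.den)^2 := by
          rw [hden', ← he2]; ring
        exact Nat.pow_left_injective (by norm_num) h33
      have hene : e ≠ 0 := by
        intro h0
        rw [h0] at he2
        simp at he2
        omega
      have hgcdme : Int.gcd m ((e:ℕ):ℤ) = 1 := by
        have hred : Nat.Coprime m.natAbs d1 := x.reduced
        rw [← he2] at hred
        exact ((Nat.coprime_pow_right_iff (by norm_num : 0 < 2)) m.natAbs e).mp hred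
      have hmne : m ≠ 0 := Rat.num_ne_zero.mpr hx
      apply int_case m y.num e hene hgcdme hmne
      rw [hnum', hNdef, ← he2]
      push_cast
      ring
  · rintro ⟨rfl, rfl⟩
    norm_num
end
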